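/- arXiv:1808.04540 — 6 statements merged into one kernel-verified Lean document; each statement's English description precedes it below -/
import Mathlib

section
/- Let G be a connected graph and T a connected subgraph of G. If v_1, ..., v_m are vertices of T that are cut-vertices of G but are not cut-vertices of T, then there exist vertices v_1', ..., v_m' in V(G) \ V(T) forming an independent set in G such that for each i, the neighborhood of v_i' in G intersected with V(T) is exactly {v_i}. -/
open SimpleGraph Finset

/-- An independent set: pairwise non-adjacent vertices. -/
def IsIndepSet {V : Type*} (G : SimpleGraph V) (s : Set V) : Prop :=
  s.Pairwise fun a b => ¬ G.Adj a b

/-- `v` is a cut-vertex of `G`: deleting `v` increases the number of connected components. -/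
def IsCutVertex {V : Type*} (G : SimpleGraph V) (v : V) : Prop :=
  Nat.card G.ConnectedComponent < Nat.card (G.induce {v}ᶜ).ConnectedComponent

/-- `G` contains an induced subgraph isomorphic to `H`. -/
def HasInducedCopy {V W : Type*} (G : SimpleGraph V) (H : SimpleGraph W) : Prop :=
  ∃ s : Set V, Nonempty (H ≃g G.induce s)

/-- `H_n^1`: the complete graph on `Fin n` (the `Sum.inl` part) with a pendant vertex
(`Sum.inr i`) attached to each clique vertex `Sum.inl i`. -/
def Hgraph1 (n : ℕ) : SimpleGraph (Fin n ⊕ Fin n) :=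
  SimpleGraph.fromRel (fun a b => match a, b with
    | Sum.inl _, Sum.inl _ => True
    | Sum.inl i, Sum.inr j => i = j
    | _, _ => False)

/-- `H_n^2`: the complete graph on `Fin n` with a path of length 2 attached to each
clique vertex: `Sum.inl i` — `Sum.inr (Sum.inl i)` — `Sum.inr (Sum.inr i)`. -/
def Hgraph2 (n : ℕ) : SimpleGraph (Fin n ⊕ (Fin n ⊕ Fin n)) :=
  SimpleGraph.fromRel (fun a b => match a, b with
    | Sum.inl _, Sum.inl _ => True
    | Sum.inl i, Sum.inr (Sum.inl j) => i = j
    | Sum.inr (Sum.inl i), Sum.inr (Sum.inr j) => i = j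
    | _, _ => False)

/-- `T_n`: the complete graph on `Fin n` with a triangle attached at each clique vertex. -/
def Tgraph (n : ℕ) : SimpleGraph (Fin n ⊕ (Fin n ⊕ Fin n)) :=
  SimpleGraph.fromRel (fun a b => match a, b with
    | Sum.inl _, Sum.inl _ => True
    | Sum.inl i, Sum.inr (Sum.inl j) => i = j
    | Sum.inl i, Sum.inr (Sum.inr j) => i = j
    | Sum.inr (Sum.inl i), Sum.inr (Sum.inr j) => i = j
    | _, _ => False)

/-- `S_n^2`: the spider with `n` legs of length 2 (center `Sum.inl ()`). -/
def Sgraph2 (n : ℕ) : SimpleGraph (Unit ⊕ (Fin n ⊕ Fin n)) :=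
  SimpleGraph.fromRel (fun a b => match a, b with
    | Sum.inl _, Sum.inr (Sum.inl _) => True
    | Sum.inr (Sum.inl i), Sum.inr (Sum.inr j) => i = j
    | _, _ => False)

/-- `F_n`: `n` triangles sharing exactly one common vertex (the center `Sum.inl ()`). -/
def Fgraph (n : ℕ) : SimpleGraph (Unit ⊕ (Fin n ⊕ Fin n)) :=
  SimpleGraph.fromRel (fun a b => match a, b with
    | Sum.inl _, Sum.inr _ => True
    | Sum.inr (Sum.inl i), Sum.inr (Sum.inr j) => i = j
    | _, _ => False)

/-- The matching number of `G`. -/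
noncomputable def matchNum {V : Type*} (G : SimpleGraph V) : ℕ :=
  sSup {k | ∃ M : G.Subgraph, M.IsMatching ∧ M.edgeSet.ncard = k}

/-- The vertex cover number of `G`. -/
noncomputable def coverNum {V : Type*} (G : SimpleGraph V) : ℕ :=
  sInf {k | ∃ s : Set V, (∀ ⦃u w⦄, G.Adj u w → u ∈ s ∨ w ∈ s) ∧ s.ncard = k}

/-! Deleting `v i` disconnects `G`, while `T - v i` stays connected and so lies in a single
component of `G - v i`. A neighbour `v' i` of `v i` in another component reaches `T` only through
`v i`, which gives `N(v' i) ∩ T = {v i}`; an edge `v' i v' j` would give the walk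
`v' i, v' j, v j` into `T` avoiding `v i`. -/

section

variable {V : Type*} {G : SimpleGraph V}

namespace SimpleGraph

lemma Connected.natCard_connectedComponent (h : G.Connected) :
    Nat.card G.ConnectedComponent = 1 :=
  have := h.preconnected.subsingleton_connectedComponent
  have : Nonempty G.ConnectedComponent := h.nonempty.map G.connectedComponentMk
  Nat.card_unique

lemma Walk.exists_adj_reachable_induce_compl {z w : V} (p : G.Walk z w) (hz : z ≠ w) :
    ∃ u, ∃ hu : u ≠ w, G.Adj u w ∧ (G.induce {w}ᶜ).Reachable ⟨z, hz⟩ ⟨u, hu⟩ := by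
  induction p with
  | nil => exact absurd rfl hz
  | @cons a c b h q ih =>
    by_cases hc : c = b
    · subst hc
      exact ⟨a, hz, h, .refl _⟩
    · obtain ⟨u, hu, huw, hcu⟩ := ih hc
      have hac : (G.induce {b}ᶜ).Adj ⟨a, hz⟩ ⟨c, hc⟩ := h
      exact ⟨u, hu, huw, hac.reachable.trans hcu⟩

lemma Connected.preconnected_induce_compl_of_not_isCutVertex [Finite V] (hG : G.Connected)
    {w : V} (hw : ¬ IsCutVertex G w) : (G.induce {w}ᶜ).Preconnected := by
  rw [IsCutVertex, hG.natCard_connectedComponent, not_lt,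
    Finite.card_le_one_iff_subsingleton] at hw
  exact fun _ _ => ConnectedComponent.eq.mp (Subsingleton.elim _ _)

lemma Subgraph.Connected.exists_walk_notMem_support [Finite V] {T : G.Subgraph}
    (hT : T.Connected) {w : V} (hwT : w ∈ T.verts) (hw : ¬ IsCutVertex T.coe ⟨w, hwT⟩)
    {x y : V} (hx : x ∈ T.verts) (hy : y ∈ T.verts) (hxw : x ≠ w) (hyw : y ≠ w) :
    ∃ p : G.Walk x y, w ∉ p.support := by
  obtain ⟨q⟩ := hT.coe.preconnected_induce_compl_of_not_isCutVertex hw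
    ⟨⟨x, hx⟩, fun h => hxw congr(Subtype.val $h)⟩
    ⟨⟨y, hy⟩, fun h => hyw congr(Subtype.val $h)⟩
  refine ⟨(q.map (T.hom.comp (Embedding.induce _).toHom)).copy (by simp) (by simp), ?_⟩
  simp only [Walk.support_copy, Walk.support_map, List.mem_map, not_exists, not_and]
  exact fun z _ hz => z.2 (Subtype.ext hz)

end SimpleGraph

lemma IsCutVertex.nontrivial_connectedComponent (hG : G.Connected) {w : V} (hw : IsCutVertex G w) :
    Nontrivial (G.induce {w}ᶜ).ConnectedComponent := by
  rw [IsCutVertex, hG.natCard_connectedComponent] at hw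
  have := Nat.finite_of_card_ne_zero (ne_of_gt (zero_lt_one.trans hw))
  exact Finite.one_lt_card_iff_nontrivial.mp hw

theorem IsCutVertex.exists_adj_forall_walk_mem_support (hG : G.Connected) {w : V}
    (hw : IsCutVertex G w) {S : Set V}
    (hS : ∀ x ∈ S, ∀ y ∈ S, x ≠ w → y ≠ w → ∃ p : G.Walk x y, w ∉ p.support) :
    ∃ u, G.Adj u w ∧ ∀ x ∈ S, ∀ p : G.Walk u x, w ∈ p.support := by
  set H := G.induce {w}ᶜ
  have hreach {x y : V} (p : G.Walk x y) (hp : w ∉ p.support) :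
      H.Reachable ⟨x, fun h => hp (h ▸ p.start_mem_support)⟩
        ⟨y, fun h => hp (h ▸ p.end_mem_support)⟩ :=
    ⟨p.induce _ fun z hz (hzw : z = w) => hp (hzw ▸ hz)⟩
  obtain ⟨c, hc⟩ : ∃ c : H.ConnectedComponent,
      ∀ x (hx : x ≠ w), x ∈ S → H.connectedComponentMk ⟨x, hx⟩ ≠ c := by
    have := hw.nontrivial_connectedComponent hG
    by_cases hSw : ∃ t ∈ S, t ≠ w
    · obtain ⟨t, htS, htw⟩ := hSw
      obtain ⟨c, hc⟩ := exists_ne (H.connectedComponentMk ⟨t, htw⟩)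
      refine ⟨c, fun x hx hxS hxc => hc ?_⟩
      obtain ⟨p, hp⟩ := hS t htS x hxS htw hx
      rw [← hxc]
      exact ConnectedComponent.sound (hreach p hp).symm
    · exact ⟨Classical.arbitrary _, fun x hx hxS _ => hSw ⟨x, hxS, hx⟩⟩
  obtain ⟨⟨z, hz⟩, rfl⟩ := c.exists_rep
  obtain ⟨u, hu, huw, hzu⟩ := (hG.preconnected z w).some.exists_adj_reachable_induce_compl hz
  refine ⟨u, huw, fun x hxS p => by_contra fun hp => ?_⟩
  exact hc x _ hxS (ConnectedComponent.sound (hzu.trans (hreach p hp)).symm)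

end

theorem stmt0 {V : Type*} [Fintype V] (G : SimpleGraph V) (hG : G.Connected)
    (T : G.Subgraph) (hT : T.Connected) (m : ℕ) (v : Fin m → V)
    (hinj : Function.Injective v) (hvT : ∀ i, v i ∈ T.verts)
    (hcutG : ∀ i, IsCutVertex G (v i))
    (hcutT : ∀ i, ¬ IsCutVertex T.coe ⟨v i, hvT i⟩) :
    ∃ v' : Fin m → V, Function.Injective v' ∧ (∀ i, v' i ∉ T.verts) ∧
      _root_.IsIndepSet G (Set.range v') ∧
      (∀ i, G.neighborSet (v' i) ∩ T.verts = {v i}) := by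
  choose v' hadj hsep using fun i => (hcutG i).exists_adj_forall_walk_mem_support hG
    fun x hx y hy hxw hyw => hT.exists_walk_notMem_support (hvT i) (hcutT i) hx hy hxw hyw
  have hv'_notMem : ∀ i, v' i ∉ T.verts := fun i h =>
    (hadj i).ne' (by simpa using hsep i _ h .nil)
  have hv'_nbr : ∀ i x, x ∈ T.verts → G.Adj (v' i) x → x = v i := fun i x hx h => by
    simpa [eq_comm, (hadj i).ne'] using hsep i x hx h.toWalk
  refine ⟨v', fun i j hij => ?_, hv'_notMem, ?_, fun i => ?_⟩
  · exact (hinj (hv'_nbr i _ (hvT j) (hij ▸ hadj j))).symm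
  · rintro _ ⟨i, rfl⟩ _ ⟨j, rfl⟩ hne hij
    obtain h | h | h : v i = v' i ∨ v i = v' j ∨ v i = v j := by
      simpa using hsep i (v j) (hvT j) (.cons hij (.cons (hadj j) .nil))
    · exact (hadj i).ne' h
    · exact hv'_notMem j (h ▸ hvT i)
    · exact hne (congrArg v' (hinj h))
  · ext x
    simp only [Set.mem_inter_iff, mem_neighborSet, Set.mem_singleton_iff]
    exact ⟨fun ⟨h, hx⟩ => hv'_nbr i x hx h, by rintro rfl; exact ⟨hadj i, hvT i⟩⟩
end

section
/- For every positive integer n there exists an integer N such that every connected graph on at least N vertices contains an induced subgraph isomorphic to the path P_n, the complete graph K_n, or the star K_{1,n}. -/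
open SimpleGraph Finset

/-!
If some vertex has degree at least `4 ^ n`, Ramsey's theorem applied to its neighbourhood gives
either `n` pairwise adjacent neighbours (a `K_n`) or `n` pairwise non-adjacent ones (with the
vertex, an induced `K_{1,n}`). Otherwise all degrees are below `d = 4 ^ n`, so the ball of radius
`k` around a vertex `u` has at most `d ^ k` vertices; once the graph has more than `d ^ n`
vertices, some `w` lies at distance more than `n` from `u`, and the first `n` vertices of a
shortest `u`-`w` walk induce a `P_n`, since along a geodesic the distance from `u` is the index.
-/

namespace SimpleGraph

variable {V W : Type*} {G : SimpleGraph V}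

theorem hasInducedCopy_iff_isIndContained {H : SimpleGraph W} :
    HasInducedCopy G H ↔ H ⊴ G :=
  isIndContained_iff_exists_iso_induce.symm

private theorem exists_isNClique_succ_or_isNIndepSet_of_forall_adj [DecidableEq V] {a b : ℕ}
    {v : V} {s u : Finset V} (hv : v ∈ s) (hu : u ⊆ s.erase v) (hadj : ∀ x ∈ u, G.Adj v x)
    (h : ∃ t ⊆ u, G.IsNClique a t ∨ G.IsNIndepSet b t) :
    ∃ t ⊆ s, G.IsNClique (a + 1) t ∨ G.IsNIndepSet b t := by
  obtain ⟨t, ht, hclique | hindep⟩ := h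
  · exact ⟨insert v t, insert_subset hv (ht.trans (hu.trans (erase_subset v s))),
      Or.inl (hclique.insert fun x hx => hadj x (ht hx))⟩
  · exact ⟨t, ht.trans (hu.trans (erase_subset v s)), Or.inr hindep⟩

theorem exists_isNClique_or_isNIndepSet (G : SimpleGraph V) (a b : ℕ) (s : Finset V)
    (hs : 2 ^ (a + b) ≤ #s) : ∃ t ⊆ s, G.IsNClique a t ∨ G.IsNIndepSet b t := by
  classical
  obtain ⟨m, hm⟩ : ∃ m, a + b = m := ⟨_, rfl⟩
  induction m generalizing G a b s with
  | zero =>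
    obtain rfl : a = 0 := by omega
    exact ⟨∅, empty_subset s, Or.inl (isNClique_zero.mpr rfl)⟩
  | succ m ih =>
    obtain _ | a := a
    · exact ⟨∅, empty_subset s, Or.inl (isNClique_zero.mpr rfl)⟩
    obtain _ | b := b
    · exact ⟨∅, empty_subset s, Or.inr ⟨by simp, rfl⟩⟩
    obtain ⟨v, hv⟩ : s.Nonempty := card_pos.mp ((Nat.two_pow_pos _).trans_le hs)
    set nbrs := (s.erase v).filter (G.Adj v)
    set nonNbrs := (s.erase v).filter (Gᶜ.Adj v)
    have hnonNbrs_eq : nonNbrs = (s.erase v).filter (fun x => ¬ G.Adj v x) :=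
      filter_congr fun x hx => by simp [compl_adj, (ne_of_mem_erase hx).symm]
    have hsplit : #nbrs + #nonNbrs + 1 = #s := by
      rw [hnonNbrs_eq, card_filter_add_card_filter_not, card_erase_add_one hv]
    have hpow : 2 ^ (a + 1 + (b + 1)) = 2 ^ (a + b + 1) + 2 ^ (a + b + 1) := by
      rw [show a + 1 + (b + 1) = a + b + 1 + 1 by omega, pow_succ, mul_two]
    by_cases hnbrs : 2 ^ (a + b + 1) ≤ #nbrs
    · exact exists_isNClique_succ_or_isNIndepSet_of_forall_adj hv (filter_subset _ _)
        (fun x hx => (mem_filter.mp hx).2)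
        (ih G a (b + 1) nbrs (by rwa [← add_assoc]) (by omega))
    · have hnonNbrs : 2 ^ (b + (a + 1)) ≤ #nonNbrs := by
        rw [show b + (a + 1) = a + b + 1 by omega]
        omega
      obtain ⟨t, ht, h⟩ := exists_isNClique_succ_or_isNIndepSet_of_forall_adj hv
        (filter_subset _ _) (fun x hx => (mem_filter.mp hx).2)
        (ih Gᶜ b (a + 1) nonNbrs hnonNbrs (by omega))
      exact ⟨t, ht, by simpa [or_comm] using h⟩

theorem IsNClique.top_isIndContained {n : ℕ} {s : Finset V} (h : G.IsNClique n s) :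
    (⊤ : SimpleGraph (Fin n)) ⊴ G :=
  top_isIndContained_iff_top_isContained.mpr
    ((not_cliqueFree_iff_top_isContained n).mp h.not_cliqueFree)

theorem IsNIndepSet.completeBipartiteGraph_isIndContained {n : ℕ} {v : V} {t : Finset V}
    (ht : G.IsNIndepSet n t) (hv : ∀ x ∈ t, G.Adj v x) :
    completeBipartiteGraph (Fin 1) (Fin n) ⊴ G := by
  let e : Fin n ≃ t := (t.equivFinOfCardEq ht.card_eq).symm
  have hadj (i : Fin n) : G.Adj v (e i) := hv _ (e i).2
  have hnadj (i j : Fin n) : ¬ G.Adj (e i) (e j) := by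
    by_cases hij : i = j
    · exact hij ▸ G.irrefl
    · exact ht.isIndepSet (e i).2 (e j).2 (fun h => hij (e.injective (Subtype.ext h)))
  refine ⟨{ toFun := Sum.elim (fun _ => v) (fun i => (e i : V)),
            inj' := ?_, map_rel_iff' := ?_ }⟩
  · refine Function.Injective.sumElim (fun _ _ _ => Subsingleton.elim _ _)
      (Subtype.val_injective.comp e.injective) fun _ i h => (hadj i).ne h
  · rintro (_ | i) (_ | j) <;> simp [hadj, hnadj, (hadj _).symm]

theorem top_isIndContained_or_completeBipartiteGraph_isIndContained_of_le_degree
    [Fintype V] [DecidableRel G.Adj] {n : ℕ} {v : V} (hv : 2 ^ (n + n) ≤ G.degree v) :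
    (⊤ : SimpleGraph (Fin n)) ⊴ G ∨ completeBipartiteGraph (Fin 1) (Fin n) ⊴ G := by
  classical
  obtain ⟨t, ht, hclique | hindep⟩ := G.exists_isNClique_or_isNIndepSet n n (G.neighborFinset v)
    (by rwa [card_neighborFinset_eq_degree])
  · exact Or.inl hclique.top_isIndContained
  · exact Or.inr (hindep.completeBipartiteGraph_isIndContained
      fun x hx => (G.mem_neighborFinset v x).mp (ht hx))

theorem exists_adj_dist_le_of_dist_eq_add_one {u w : V} {k : ℕ} (h : G.dist u w = k + 1) :
    ∃ x, G.Adj x w ∧ G.dist u x ≤ k := by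
  obtain ⟨p, hp⟩ := exists_walk_of_dist_ne_zero (h ▸ k.succ_ne_zero : G.dist u w ≠ 0)
  have hnil : ¬ p.Nil := by simp [← Walk.length_eq_zero_iff, hp, h]
  exact ⟨p.penultimate, p.adj_penultimate hnil,
    (dist_le p.dropLast).trans (by simp [Walk.length_dropLast, hp, h])⟩

theorem Connected.card_filter_dist_le_le_pow [Fintype V] [DecidableRel G.Adj]
    (hc : G.Connected) (u : V) {d : ℕ} (hd : ∀ v, G.degree v < d) (k : ℕ) :
    #{w | G.dist u w ≤ k} ≤ d ^ k := by
  classical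
  induction k with
  | zero =>
    have : ({w | G.dist u w ≤ 0} : Finset V) = {u} := by
      ext w
      simp [hc.dist_eq_zero_iff, eq_comm]
    rw [this, card_singleton, pow_zero]
  | succ k ih =>
    have hsub : ({w | G.dist u w ≤ k + 1} : Finset V) ⊆
        ({w | G.dist u w ≤ k} : Finset V).biUnion fun x => insert x (G.neighborFinset x) := by
      intro w hw
      simp only [mem_filter, mem_univ, true_and] at hw
      simp only [mem_biUnion, mem_filter, mem_univ, true_and, mem_insert, mem_neighborFinset]
      rcases hw.lt_or_eq with hw | hw
      · exact ⟨w, by omega, Or.inl rfl⟩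
      · obtain ⟨x, hxw, hx⟩ := exists_adj_dist_le_of_dist_eq_add_one hw
        exact ⟨x, hx, Or.inr hxw⟩
    calc #{w | G.dist u w ≤ k + 1}
        ≤ ∑ x ∈ {w | G.dist u w ≤ k}, #(insert x (G.neighborFinset x)) :=
          (card_le_card hsub).trans card_biUnion_le
      _ ≤ ∑ _x ∈ {w | G.dist u w ≤ k}, d := by
          gcongr with x
          exact (card_insert_le _ _).trans (by rw [card_neighborFinset_eq_degree]; exact hd x)
      _ ≤ d ^ (k + 1) := by
          rw [sum_const, smul_eq_mul, pow_succ]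
          exact Nat.mul_le_mul_right d ih

theorem Walk.dist_getVert_of_length_eq_dist {u v : V} (p : G.Walk u v)
    (hp : p.length = G.dist u v) {i : ℕ} (hi : i ≤ p.length) : G.dist u (p.getVert i) = i := by
  have hle : G.dist u (p.getVert i) ≤ i := (dist_le (p.take i)).trans (by simp)
  have hrest : G.dist (p.getVert i) v ≤ p.length - i := (dist_le (p.drop i)).trans (by simp)
  have := (p.take i).reachable.dist_triangle_left v
  omega

theorem Walk.pathGraph_isIndContained_of_length_eq_dist {u v : V} (p : G.Walk u v)
    (hp : p.length = G.dist u v) {n : ℕ} (hn : n ≤ p.length + 1) : pathGraph n ⊴ G := by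
  have hdist (i : Fin n) : G.dist u (p.getVert i) = i :=
    p.dist_getVert_of_length_eq_dist hp (by omega)
  refine ⟨{ toFun := fun i => p.getVert i, inj' := fun i j h => ?_,
            map_rel_iff' := fun {i j} => ?_ }⟩
  · exact Fin.ext (by simpa [hdist] using congrArg (G.dist u) h)
  change G.Adj (p.getVert i) (p.getVert j) ↔ _
  rw [pathGraph_adj]
  constructor
  · intro hadj
    have hne : (i : ℕ) ≠ j := fun h => hadj.ne (by rw [Fin.ext h])
    have := hadj.diff_dist_adj (u := u)
    simp only [hdist] at this
    omega
  · rintro (h | h)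
    · simpa [← h] using p.adj_getVert_succ (i := i) (by omega)
    · simpa [← h] using (p.adj_getVert_succ (i := j) (by omega)).symm

theorem Connected.pathGraph_isIndContained_of_degree_lt [Fintype V] [DecidableRel G.Adj]
    (hc : G.Connected) {d n : ℕ} (hd : ∀ v, G.degree v < d) (hcard : d ^ n < Fintype.card V) :
    pathGraph n ⊴ G := by
  classical
  obtain ⟨u⟩ : Nonempty V := Fintype.card_pos_iff.mp (by omega)
  obtain ⟨w, hw⟩ : ∃ w, n < G.dist u w := by
    by_contra! h
    have : #{w | G.dist u w ≤ n} = Fintype.card V := by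
      rw [filter_true_of_mem fun w _ => h w, card_univ]
    have := hc.card_filter_dist_le_le_pow u hd n
    omega
  obtain ⟨p, hp⟩ := hc.exists_walk_length_eq_dist u w
  exact p.pathGraph_isIndContained_of_length_eq_dist hp (by omega)

end SimpleGraph

theorem stmt2_general (n : ℕ) :
    ∃ N : ℕ, ∀ (V : Type) (_ : Fintype V) (G : SimpleGraph V),
      G.Connected → N ≤ Fintype.card V →
        HasInducedCopy G (SimpleGraph.pathGraph n) ∨
        HasInducedCopy G (⊤ : SimpleGraph (Fin n)) ∨
        HasInducedCopy G (completeBipartiteGraph (Fin 1) (Fin n)) := by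
  classical
  refine ⟨(2 ^ (n + n)) ^ n + 1, fun V _ G hc hcard => ?_⟩
  simp only [hasInducedCopy_iff_isIndContained]
  by_cases hdeg : ∃ v, 2 ^ (n + n) ≤ G.degree v
  · obtain ⟨v, hv⟩ := hdeg
    exact Or.inr (top_isIndContained_or_completeBipartiteGraph_isIndContained_of_le_degree hv)
  · push Not at hdeg
    exact Or.inl (hc.pathGraph_isIndContained_of_degree_lt hdeg (by omega))

theorem stmt2 (n : ℕ) (hn : 1 ≤ n) :
    ∃ N : ℕ, ∀ (V : Type) (_ : Fintype V) (G : SimpleGraph V),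
      G.Connected → N ≤ Fintype.card V →
        HasInducedCopy G (SimpleGraph.pathGraph n) ∨
        HasInducedCopy G (⊤ : SimpleGraph (Fin n)) ∨
        HasInducedCopy G (completeBipartiteGraph (Fin 1) (Fin n)) :=
  stmt2_general n
end

section
/- For every positive integer n there exists an integer N such that every connected graph G with matching number at least N contains an induced subgraph isomorphic to P_n, K_n, K_{n,n}, S_n^2, or F_n. -/
open SimpleGraph Finset

/-
A connected graph with no induced `P_n` has all distances below `n`. Ramsey's theorem, applied to
the four adjacency patterns between the endpoints of two edges of a large matching, yields `K_n`,
a half graph (which contains `K_{n,n}`), or a large induced matching. An induced matching whose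
first endpoints lie within distance `d` of a vertex `x` is handled by induction on `d`. Edges with
an endpoint within distance `d - 1` are reoriented and the induction hypothesis applies. Otherwise
each first endpoint `(E i).1` has a neighbour `y i` closer to `x`, lying on no edge of the matching.
If `2n` edges share the same `y i`, that vertex together with them spans `S_n^2` or `F_n`; if not,
the edges `(y i, (E i).1)` with distinct `y i` form a large matching within distance `d - 1`, and
the Ramsey step applies to it again.
-/
universe u v

lemma hasInducedCopy_of_embedding {V W : Type*} {G : SimpleGraph V} {H : SimpleGraph W}
    (f : H ↪g G) : HasInducedCopy G H :=
  isIndContained_iff_exists_iso_induce.mp ⟨f⟩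

def HasUnavoidableCopy {V : Type*} (G : SimpleGraph V) (n : ℕ) : Prop :=
  HasInducedCopy G (SimpleGraph.pathGraph n) ∨
  HasInducedCopy G (⊤ : SimpleGraph (Fin n)) ∨
  HasInducedCopy G (completeBipartiteGraph (Fin n) (Fin n)) ∨
  HasInducedCopy G (Sgraph2 n) ∨
  HasInducedCopy G (Fgraph n)

lemma Finset.exists_embedding_mem {ι : Type*} {t : Finset ι} {n : ℕ} (ht : n ≤ #t) :
    ∃ σ : Fin n ↪ ι, ∀ i, σ i ∈ t :=
  ⟨(Fin.castLEEmb ht).trans (t.equivFin.symm.toEmbedding.trans (.subtype _)),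
    fun _ => (t.equivFin.symm _).2⟩

lemma Finset.exists_orderEmbedding_mem {ι : Type*} [LinearOrder ι] {t : Finset ι} {n : ℕ}
    (ht : n ≤ #t) : ∃ σ : Fin n ↪o ι, ∀ i, σ i ∈ t := by
  obtain ⟨u, hut, hu⟩ := exists_subset_card_eq ht
  exact ⟨u.orderEmbOfFin hu, fun i => hut (u.orderEmbOfFin_mem hu i)⟩

section Homogeneous

variable {ι : Type*} [LinearOrder ι]

def IsHomogeneous (r : ι → ι → Prop) (t : Finset ι) : Prop :=
  ∀ a ∈ t, ∀ b ∈ t, a < b → r a b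

variable {r : ι → ι → Prop} {s t : Finset ι}

lemma IsHomogeneous.mono (h : IsHomogeneous r t) (hst : s ⊆ t) : IsHomogeneous r s :=
  fun a ha b hb => h a (hst ha) b (hst hb)

lemma IsHomogeneous.insert_of_subset_filter {x : ι} [DecidablePred (r x)]
    (h : IsHomogeneous r t) (hx : ∀ b ∈ s, x < b) (hts : t ⊆ s.filter (r x)) :
    IsHomogeneous r (insert x t) ∧ #(insert x t) = #t + 1 := by
  have hxt : ∀ b ∈ t, x < b ∧ r x b := fun b hb =>
    ⟨hx b (mem_filter.mp (hts hb)).1, (mem_filter.mp (hts hb)).2⟩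
  refine ⟨fun a ha b hb hab => ?_, card_insert_of_notMem fun h => lt_irrefl x (hxt x h).1⟩
  rcases mem_insert.mp ha with rfl | hat
  · rcases mem_insert.mp hb with rfl | hbt
    · exact absurd hab (lt_irrefl _)
    · exact (hxt b hbt).2
  · rcases mem_insert.mp hb with rfl | hbt
    · exact absurd hab (hxt a hat).1.asymm
    · exact h a hat b hbt hab

end Homogeneous

theorem exists_isHomogeneous_or_isHomogeneous_not : ∀ p q : ℕ, ∃ R : ℕ,
    ∀ {ι : Type u} [LinearOrder ι] (r : ι → ι → Prop) (s : Finset ι), R ≤ #s →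
      (∃ t ⊆ s, p ≤ #t ∧ IsHomogeneous r t) ∨
      (∃ t ⊆ s, q ≤ #t ∧ IsHomogeneous (fun a b => ¬ r a b) t)
  | 0, _ => ⟨0, fun _ _ _ => .inl ⟨∅, empty_subset _, le_rfl, by simp [IsHomogeneous]⟩⟩
  | _, 0 => ⟨0, fun _ _ _ => .inr ⟨∅, empty_subset _, le_rfl, by simp [IsHomogeneous]⟩⟩
  | p + 1, q + 1 => by
    obtain ⟨R₁, hR₁⟩ := exists_isHomogeneous_or_isHomogeneous_not p (q + 1)
    obtain ⟨R₂, hR₂⟩ := exists_isHomogeneous_or_isHomogeneous_not (p + 1) q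
    refine ⟨R₁ + R₂ + 1, fun {ι} _ r s hs => ?_⟩
    classical
    have hne : s.Nonempty := card_pos.mp (by omega)
    set x := s.min' hne
    have hx : ∀ b ∈ s.erase x, x < b := fun b hb =>
      (s.min'_le b (mem_of_mem_erase hb)).lt_of_ne (ne_of_mem_erase hb).symm
    set S₁ := (s.erase x).filter (r x)
    set S₂ := (s.erase x).filter (fun b => ¬ r x b)
    have hS : #S₁ + #S₂ + 1 = #s := by
      rw [card_filter_add_card_filter_not, card_erase_add_one (s.min'_mem hne)]
    have hS₁ : S₁ ⊆ s := (filter_subset _ _).trans (erase_subset _ _)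
    have hS₂ : S₂ ⊆ s := (filter_subset _ _).trans (erase_subset _ _)
    by_cases h : R₁ ≤ #S₁
    · rcases hR₁ r S₁ h with ⟨t, hts, ht, hr⟩ | ⟨t, hts, ht, hr⟩
      · obtain ⟨hxr, hcard⟩ := hr.insert_of_subset_filter hx hts
        exact .inl ⟨insert x t, insert_subset (s.min'_mem hne) (hts.trans hS₁), by omega, hxr⟩
      · exact .inr ⟨t, hts.trans hS₁, ht, hr⟩
    · rcases hR₂ r S₂ (by omega) with ⟨t, hts, ht, hr⟩ | ⟨t, hts, ht, hr⟩
      · exact .inl ⟨t, hts.trans hS₂, ht, hr⟩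
      · obtain ⟨hxr, hcard⟩ := hr.insert_of_subset_filter hx hts
        exact .inr ⟨insert x t, insert_subset (s.min'_mem hne) (hts.trans hS₂), by omega, hxr⟩

section HomogeneousAdj

variable {V ι : Type*} [LinearOrder ι] {G : SimpleGraph V} {t : Finset ι} {u w : ι → V}

lemma IsHomogeneous.not_adj {a b : ι}
    (h₁ : IsHomogeneous (fun a b => ¬ G.Adj (u a) (w b)) t)
    (h₂ : IsHomogeneous (fun a b => ¬ G.Adj (w a) (u b)) t)
    (ha : a ∈ t) (hb : b ∈ t) (hab : a ≠ b) : ¬ G.Adj (u a) (w b) := by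
  rcases hab.lt_or_gt with h | h
  · exact h₁ a ha b hb h
  · exact fun hadj => h₂ b hb a ha h hadj.symm

lemma IsHomogeneous.not_adj_of_mem {a b : ι}
    (h : IsHomogeneous (fun a b => ¬ G.Adj (u a) (u b)) t) (ha : a ∈ t) (hb : b ∈ t) :
    ¬ G.Adj (u a) (u b) := by
  rcases eq_or_ne a b with rfl | hab
  · exact G.irrefl
  · exact h.not_adj h ha hb hab

lemma IsHomogeneous.adj {a b : ι} (h : IsHomogeneous (fun a b => G.Adj (u a) (u b)) t)
    (ha : a ∈ t) (hb : b ∈ t) (hab : a ≠ b) : G.Adj (u a) (u b) := by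
  rcases hab.lt_or_gt with h' | h'
  · exact h a ha b hb h'
  · exact (h b hb a ha h').symm

lemma hasInducedCopy_top_of_isHomogeneous {n : ℕ} (ht : n ≤ #t)
    (h : IsHomogeneous (fun a b => G.Adj (u a) (u b)) t) :
    HasInducedCopy G (⊤ : SimpleGraph (Fin n)) := by
  obtain ⟨σ, hσ⟩ := exists_embedding_mem ht
  have hadj : ∀ i j, G.Adj (u (σ i)) (u (σ j)) ↔ i ≠ j := fun i j =>
    ⟨fun hij hij' => G.irrefl (hij' ▸ hij),
      fun hij => h.adj (hσ i) (hσ j) (σ.injective.ne hij)⟩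
  refine hasInducedCopy_of_embedding ⟨⟨u ∘ σ, fun i j hij => ?_⟩, ?_⟩
  · by_contra hne
    exact (hadj i j).mpr hne |>.ne hij
  · intro i j
    exact (hadj i j).trans (top_adj i j).symm

lemma hasInducedCopy_completeBipartiteGraph_of_isHomogeneous {n : ℕ} (ht : n + n ≤ #t)
    (hu : Set.InjOn u t) (hw : Set.InjOn w t) (huw : ∀ a ∈ t, ∀ b ∈ t, u a ≠ w b)
    (huu : IsHomogeneous (fun a b => ¬ G.Adj (u a) (u b)) t)
    (hww : IsHomogeneous (fun a b => ¬ G.Adj (w a) (w b)) t)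
    (h : IsHomogeneous (fun a b => G.Adj (u a) (w b)) t) :
    HasInducedCopy G (completeBipartiteGraph (Fin n) (Fin n)) := by
  obtain ⟨σ, hσ⟩ := exists_orderEmbedding_mem ht
  have hlt : ∀ i j, σ (Fin.castAdd n i) < σ (Fin.natAdd n j) := fun i j =>
    σ.strictMono (by simp [Fin.lt_def]; omega)
  refine hasInducedCopy_of_embedding ⟨⟨Sum.elim (fun i => u (σ (Fin.castAdd n i)))
    (fun j => w (σ (Fin.natAdd n j))), ?_⟩, ?_⟩
  · refine Function.Injective.sumElim (fun i j hij => ?_) (fun i j hij => ?_)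
      (fun i j => huw _ (hσ _) _ (hσ _))
    · simpa using σ.injective (hu (hσ _) (hσ _) hij)
    · simpa using σ.injective (hw (hσ _) (hσ _) hij)
  · rintro (i | i) (j | j)
    · simpa using huu.not_adj_of_mem (hσ _) (hσ _)
    · simpa using h _ (hσ _) _ (hσ _) (hlt i j)
    · simpa using (h _ (hσ _) _ (hσ _) (hlt j i)).symm
    · simpa using hww.not_adj_of_mem (hσ _) (hσ _)

end HomogeneousAdj

section InducedMatching

variable {V ι : Type*} {G : SimpleGraph V} {E : ι → V × V} {s t : Finset ι}

structure IsInducedMatching (G : SimpleGraph V) (E : ι → V × V) (s : Finset ι) : Prop where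
  adj : ∀ i ∈ s, G.Adj (E i).1 (E i).2
  not_adj : ∀ i ∈ s, ∀ j ∈ s, i ≠ j →
    ∀ u ∈ s((E i).1, (E i).2), ∀ w ∈ s((E j).1, (E j).2), ¬ G.Adj u w

namespace IsInducedMatching

variable {i j : ι}

lemma mono (hE : IsInducedMatching G E s) (hts : t ⊆ s) : IsInducedMatching G E t :=
  ⟨fun i hi => hE.adj i (hts hi), fun i hi j hj => hE.not_adj i (hts hi) j (hts hj)⟩

lemma exists_reorient (hE : IsInducedMatching G E s) (p : V → Prop)
    (hp : ∀ i ∈ s, p (E i).1 ∨ p (E i).2) :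
    ∃ E' : ι → V × V, IsInducedMatching G E' s ∧ ∀ i ∈ s, p (E' i).1 := by
  classical
  set E' := fun i => if p (E i).1 then E i else (E i).swap
  have hE' : ∀ i, s((E' i).1, (E' i).2) = s((E i).1, (E i).2) := fun i => by
    by_cases h : p (E i).1 <;> simp [E', h, Sym2.eq_swap]
  refine ⟨E', ⟨fun i hi => ?_, by simpa only [hE'] using hE.not_adj⟩, fun i hi => ?_⟩
  · by_cases h : p (E i).1
    · simpa [E', h] using hE.adj i hi
    · simpa [E', h] using (hE.adj i hi).symm
  · by_cases h : p (E i).1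
    · simp [E', h]
    · simpa [E', h] using (hp i hi).resolve_left h

lemma not_adj_fst (hE : IsInducedMatching G E s) (hi : i ∈ s) (hj : j ∈ s) :
    ¬ G.Adj (E i).1 (E j).1 := by
  rcases eq_or_ne i j with rfl | hij
  · exact G.irrefl
  · exact hE.not_adj i hi j hj hij _ (Sym2.mem_mk_left _ _) _ (Sym2.mem_mk_left _ _)

lemma not_adj_snd (hE : IsInducedMatching G E s) (hi : i ∈ s) (hj : j ∈ s) :
    ¬ G.Adj (E i).2 (E j).2 := by
  rcases eq_or_ne i j with rfl | hij
  · exact G.irrefl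
  · exact hE.not_adj i hi j hj hij _ (Sym2.mem_mk_right _ _) _ (Sym2.mem_mk_right _ _)

lemma adj_fst_snd_iff (hE : IsInducedMatching G E s) (hi : i ∈ s) (hj : j ∈ s) :
    G.Adj (E i).1 (E j).2 ↔ i = j := by
  refine ⟨fun h => ?_, fun h => h ▸ hE.adj i hi⟩
  by_contra hij
  exact hE.not_adj i hi j hj hij _ (Sym2.mem_mk_left _ _) _ (Sym2.mem_mk_right _ _) h

lemma adj_snd_fst_iff (hE : IsInducedMatching G E s) (hi : i ∈ s) (hj : j ∈ s) :
    G.Adj (E i).2 (E j).1 ↔ j = i := by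
  rw [adj_comm, hE.adj_fst_snd_iff hj hi]

lemma injOn_fst (hE : IsInducedMatching G E s) : Set.InjOn (fun i => (E i).1) s :=
  fun i hi j hj (h : (E i).1 = (E j).1) => ((hE.adj_fst_snd_iff hj hi).mp (h ▸ hE.adj i hi)).symm

lemma injOn_snd (hE : IsInducedMatching G E s) : Set.InjOn (fun i => (E i).2) s :=
  fun i hi j hj (h : (E i).2 = (E j).2) => (hE.adj_fst_snd_iff hi hj).mp (h ▸ hE.adj i hi)

lemma fst_ne_snd (hE : IsInducedMatching G E s) (hi : i ∈ s) (hj : j ∈ s) :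
    (E i).1 ≠ (E j).2 :=
  fun h => hE.not_adj_fst hj hi (h ▸ hE.adj j hj)

lemma injective_sumElim {κ : Type*} (hE : IsInducedMatching G E t) {σ : κ → ι}
    (hσ : Function.Injective σ) (hσt : ∀ k, σ k ∈ t) :
    Function.Injective (Sum.elim (fun k => (E (σ k)).1) (fun k => (E (σ k)).2)) :=
  Function.Injective.sumElim (fun _ _ h => hσ (hE.injOn_fst (hσt _) (hσt _) h))
    (fun _ _ h => hσ (hE.injOn_snd (hσt _) (hσt _) h))
    (fun _ _ => hE.fst_ne_snd (hσt _) (hσt _))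

lemma hasInducedCopy_Fgraph {n : ℕ} (hE : IsInducedMatching G E t) (ht : n ≤ #t)
    {x : V} (h₁ : ∀ i ∈ t, G.Adj x (E i).1) (h₂ : ∀ i ∈ t, G.Adj x (E i).2) :
    HasInducedCopy G (Fgraph n) := by
  obtain ⟨σ, hσ⟩ := exists_embedding_mem ht
  refine hasInducedCopy_of_embedding
    ⟨⟨Sum.elim (fun _ => x) (Sum.elim (fun i => (E (σ i)).1) (fun i => (E (σ i)).2)),
      Function.Injective.sumElim (Function.injective_of_subsingleton _)
        (hE.injective_sumElim σ.injective hσ) ?_⟩, ?_⟩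
  · rintro ⟨⟩ (i | i)
    · exact (h₁ _ (hσ i)).ne
    · exact (h₂ _ (hσ i)).ne
  · rintro (⟨⟩ | i | i) (⟨⟩ | j | j) <;>
      simp [Fgraph, hσ, h₁, h₂, fun i => (h₁ _ (hσ i)).symm, fun i => (h₂ _ (hσ i)).symm,
        hE.adj_fst_snd_iff (hσ _) (hσ _), hE.adj_snd_fst_iff (hσ _) (hσ _),
        hE.not_adj_fst (hσ _) (hσ _), hE.not_adj_snd (hσ _) (hσ _)]

lemma hasInducedCopy_Sgraph2 {n : ℕ} (hE : IsInducedMatching G E t) (ht : n ≤ #t)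
    {x : V} (h₁ : ∀ i ∈ t, G.Adj x (E i).1) (h₂ : ∀ i ∈ t, ¬ G.Adj x (E i).2)
    (hx : ∀ i ∈ t, x ≠ (E i).2) : HasInducedCopy G (Sgraph2 n) := by
  obtain ⟨σ, hσ⟩ := exists_embedding_mem ht
  refine hasInducedCopy_of_embedding
    ⟨⟨Sum.elim (fun _ => x) (Sum.elim (fun i => (E (σ i)).1) (fun i => (E (σ i)).2)),
      Function.Injective.sumElim (Function.injective_of_subsingleton _)
        (hE.injective_sumElim σ.injective hσ) ?_⟩, ?_⟩
  · rintro ⟨⟩ (i | i)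
    · exact (h₁ _ (hσ i)).ne
    · exact hx _ (hσ i)
  · have h₂' : ∀ i, ¬ G.Adj (E (σ i)).2 x := fun i h => h₂ _ (hσ i) h.symm
    rintro (⟨⟩ | i | i) (⟨⟩ | j | j) <;>
      simp [Sgraph2, hσ, h₁, h₂, h₂', fun i => (h₁ _ (hσ i)).symm,
        hE.adj_fst_snd_iff (hσ _) (hσ _), hE.adj_snd_fst_iff (hσ _) (hσ _),
        hE.not_adj_fst (hσ _) (hσ _), hE.not_adj_snd (hσ _) (hσ _)]

lemma hasUnavoidableCopy {n : ℕ} (hE : IsInducedMatching G E s) (hs : 2 * n ≤ #s) {x : V}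
    (h₁ : ∀ i ∈ s, G.Adj x (E i).1) (hx : ∀ i ∈ s, x ≠ (E i).2) :
    HasUnavoidableCopy G n := by
  classical
  have hcard := card_filter_add_card_filter_not (s := s) (fun i => G.Adj x (E i).2)
  by_cases h : n ≤ #(s.filter fun i => G.Adj x (E i).2)
  · exact .inr <| .inr <| .inr <| .inr <| (hE.mono (filter_subset _ _)).hasInducedCopy_Fgraph h
      (fun i hi => h₁ i (mem_filter.mp hi).1) (fun i hi => (mem_filter.mp hi).2)
  · exact .inr <| .inr <| .inr <| .inl <|
      (hE.mono (filter_subset _ _)).hasInducedCopy_Sgraph2 (by omega)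
      (fun i hi => h₁ i (mem_filter.mp hi).1) (fun i hi => (mem_filter.mp hi).2)
      (fun i hi => hx i (mem_filter.mp hi).1)

end IsInducedMatching

lemma isInducedMatching_of_isHomogeneous [LinearOrder ι]
    (hadj : ∀ i ∈ s, G.Adj (E i).1 (E i).2)
    (h₁ : IsHomogeneous (fun a b => ¬ G.Adj (E a).1 (E b).1) s)
    (h₂ : IsHomogeneous (fun a b => ¬ G.Adj (E a).1 (E b).2) s)
    (h₃ : IsHomogeneous (fun a b => ¬ G.Adj (E a).2 (E b).1) s)
    (h₄ : IsHomogeneous (fun a b => ¬ G.Adj (E a).2 (E b).2) s) :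
    IsInducedMatching G E s := by
  refine ⟨hadj, fun i hi j hj hij u hu w hw => ?_⟩
  rcases Sym2.mem_iff.mp hu with rfl | rfl <;> rcases Sym2.mem_iff.mp hw with rfl | rfl
  · exact h₁.not_adj h₁ hi hj hij
  · exact h₂.not_adj h₃ hi hj hij
  · exact h₃.not_adj h₂ hi hj hij
  · exact h₄.not_adj h₄ hi hj hij

end InducedMatching

structure IsDisjointEdgeFamily {V ι : Type*} (G : SimpleGraph V) (E : ι → V × V)
    (s : Finset ι) : Prop where
  adj : ∀ i ∈ s, G.Adj (E i).1 (E i).2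
  injOn_fst : Set.InjOn (fun i => (E i).1) s
  injOn_snd : Set.InjOn (fun i => (E i).2) s
  fst_ne_snd : ∀ i ∈ s, ∀ j ∈ s, (E i).1 ≠ (E j).2

theorem exists_hasUnavoidableCopy_or_isInducedMatching (n m : ℕ) : ∃ N : ℕ,
    ∀ {V : Type u} {ι : Type v} [LinearOrder ι] (G : SimpleGraph V) (E : ι → V × V)
      (s : Finset ι), IsDisjointEdgeFamily G E s → N ≤ #s →
      HasUnavoidableCopy G n ∨ ∃ t ⊆ s, m ≤ #t ∧ IsInducedMatching G E t := by
  obtain ⟨R₁, hR₁⟩ := exists_isHomogeneous_or_isHomogeneous_not (n + n) m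
  obtain ⟨R₂, hR₂⟩ := exists_isHomogeneous_or_isHomogeneous_not (n + n) R₁
  obtain ⟨R₃, hR₃⟩ := exists_isHomogeneous_or_isHomogeneous_not n R₂
  obtain ⟨R₄, hR₄⟩ := exists_isHomogeneous_or_isHomogeneous_not n R₃
  refine ⟨R₄, fun G E s hE hs => ?_⟩
  rcases hR₄ (fun a b => G.Adj (E a).1 (E b).1) s hs with
    ⟨t, -, ht, h⟩ | ⟨t₁, ht₁s, ht₁, h₁⟩
  · exact .inl <| .inr <| .inl <| hasInducedCopy_top_of_isHomogeneous ht h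
  rcases hR₃ (fun a b => G.Adj (E a).2 (E b).2) t₁ ht₁ with
    ⟨t, -, ht, h⟩ | ⟨t₂, ht₂s, ht₂, h₄⟩
  · exact .inl <| .inr <| .inl <| hasInducedCopy_top_of_isHomogeneous ht h
  have hs₂ : t₂ ⊆ s := ht₂s.trans ht₁s
  rcases hR₂ (fun a b => G.Adj (E a).1 (E b).2) t₂ ht₂ with
    ⟨t, hts, ht, h⟩ | ⟨t₃, ht₃s, ht₃, h₂⟩
  · exact .inl <| .inr <| .inr <| .inl <| hasInducedCopy_completeBipartiteGraph_of_isHomogeneous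
      ht (hE.injOn_fst.mono (hts.trans hs₂)) (hE.injOn_snd.mono (hts.trans hs₂))
      (fun a ha b hb => hE.fst_ne_snd a (hs₂ (hts ha)) b (hs₂ (hts hb)))
      ((h₁.mono ht₂s).mono hts) (h₄.mono hts) h
  have hs₃ : t₃ ⊆ s := ht₃s.trans hs₂
  rcases hR₁ (fun a b => G.Adj (E a).2 (E b).1) t₃ ht₃ with
    ⟨t, hts, ht, h⟩ | ⟨t₄, ht₄s, ht₄, h₃⟩
  · exact .inl <| .inr <| .inr <| .inl <| hasInducedCopy_completeBipartiteGraph_of_isHomogeneous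
      ht (hE.injOn_snd.mono (hts.trans hs₃)) (hE.injOn_fst.mono (hts.trans hs₃))
      (fun a ha b hb => (hE.fst_ne_snd b (hs₃ (hts hb)) a (hs₃ (hts ha))).symm)
      ((h₄.mono ht₃s).mono hts) ((h₁.mono (ht₃s.trans ht₂s)).mono hts) h
  refine .inr ⟨t₄, ht₄s.trans hs₃, ht₄, isInducedMatching_of_isHomogeneous
    (fun i hi => hE.adj i (hs₃ (ht₄s hi))) (h₁.mono (ht₄s.trans (ht₃s.trans ht₂s)))
    (h₂.mono ht₄s) h₃ (h₄.mono (ht₄s.trans ht₃s))⟩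

lemma Finset.exists_lt_card_fiber_or_exists_injOn {α β : Type*} [DecidableEq β] (f : α → β)
    (s : Finset α) {k N : ℕ} (h : k * N < #s) :
    (∃ b, k < #(s.filter fun a => f a = b)) ∨ ∃ t ⊆ s, Set.InjOn f t ∧ N ≤ #t := by
  by_cases hN : N ≤ #(s.image f)
  · obtain ⟨t, hts, hinj, himg⟩ := exists_subset_injOn_image_eq_of_surjOn (↑s) (s.image f)
      (by rw [coe_image]; exact Set.surjOn_image _ _)
    exact .inr ⟨t, coe_subset.mp hts, hinj, by rwa [← card_image_of_injOn hinj, himg]⟩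
  · have : #(s.image f) * k < #s :=
      (Nat.mul_le_mul_right k (not_le.mp hN).le).trans_lt (mul_comm N k ▸ h)
    obtain ⟨b, -, hb⟩ := exists_lt_card_fiber_of_mul_lt_card_of_maps_to
      (fun a ha => mem_image_of_mem f ha) this
    exact .inl ⟨b, hb⟩

lemma SimpleGraph.exists_adj_edist_le_of_edist_le_add_one {V : Type*} {G : SimpleGraph V}
    {x v : V} {d : ℕ} (h : G.edist x v ≤ d + 1) (hd : ¬ G.edist x v ≤ d) :
    ∃ y, G.Adj y v ∧ G.edist x y ≤ d := by
  obtain ⟨p, hp⟩ := exists_walk_of_edist_ne_top (ne_top_of_le_ne_top (by simp) h)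
  have hnil : ¬ p.Nil := fun hp' => hd (by simp [← hp, hp'.length_eq_zero])
  refine ⟨p.penultimate, p.adj_penultimate hnil, (edist_le p.dropLast).trans ?_⟩
  rw [← hp] at h
  rw [Walk.length_dropLast]
  norm_cast at h ⊢
  omega

lemma IsInducedMatching.hasUnavoidableCopy_or_exists_isDisjointEdgeFamily {V ι : Type*}
    {G : SimpleGraph V} {E : ι → V × V} {s : Finset ι} {n N d : ℕ} {x : V}
    (hE : IsInducedMatching G E s) (hs : 2 * n * N < #s)
    (hd : ∀ i ∈ s, G.edist x (E i).1 ≤ d + 1)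
    (hfar : ∀ i ∈ s, ¬ G.edist x (E i).1 ≤ d ∧ ¬ G.edist x (E i).2 ≤ d) :
    HasUnavoidableCopy G n ∨ ∃ (E' : ι → V × V) (J : Finset ι),
      IsDisjointEdgeFamily G E' J ∧ N ≤ #J ∧ ∀ i ∈ J, G.edist x (E' i).1 ≤ d := by
  classical
  have hpred : ∀ i ∈ s, ∃ y, G.Adj y (E i).1 ∧ G.edist x y ≤ d := fun i hi =>
    exists_adj_edist_le_of_edist_le_add_one (hd i hi) (hfar i hi).1
  have : Nonempty V := ⟨x⟩
  choose! y hy_adj hy_dist using hpred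
  have hy_ne : ∀ i ∈ s, ∀ j ∈ s, y i ≠ (E j).1 ∧ y i ≠ (E j).2 := fun i hi j hj =>
    ⟨fun h => (hfar j hj).1 (h ▸ hy_dist i hi), fun h => (hfar j hj).2 (h ▸ hy_dist i hi)⟩
  rcases exists_lt_card_fiber_or_exists_injOn y s hs with ⟨z, hz⟩ | ⟨J, hJs, hJ, hJN⟩
  · refine .inl <| (hE.mono (filter_subset _ _)).hasUnavoidableCopy hz.le (x := z)
      (fun i hi => ?_) (fun i hi => ?_) <;> obtain ⟨his, rfl⟩ := mem_filter.mp hi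
    · exact hy_adj i his
    · exact (hy_ne i his i his).2
  · refine .inr ⟨fun i => (y i, (E i).1), J, ⟨fun i hi => hy_adj i (hJs hi), hJ,
      hE.injOn_fst.mono (coe_subset.mpr hJs), fun i hi j hj => (hy_ne i (hJs hi) j (hJs hj)).1⟩,
      hJN, fun i hi => hy_dist i (hJs hi)⟩

theorem exists_hasUnavoidableCopy_of_isInducedMatching (n : ℕ) : ∀ d : ℕ, ∃ m : ℕ,
    ∀ {V : Type u} {ι : Type v} [LinearOrder ι] (G : SimpleGraph V) (x : V) (E : ι → V × V)
      (s : Finset ι), IsInducedMatching G E s → (∀ i ∈ s, G.edist x (E i).1 ≤ d) →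
      m ≤ #s → HasUnavoidableCopy G n
  | 0 => ⟨2, fun G x E s hE hd hs => by
      obtain ⟨i, hi, j, hj, hij⟩ := one_lt_card.mp hs
      have hx : ∀ i ∈ s, x = (E i).1 := fun i hi => by simpa using hd i hi
      exact absurd (hE.injOn_fst hi hj ((hx i hi).symm.trans (hx j hj))) hij⟩
  | d + 1 => by
    obtain ⟨m, hm⟩ := exists_hasUnavoidableCopy_of_isInducedMatching n d
    obtain ⟨N, hN⟩ := exists_hasUnavoidableCopy_or_isInducedMatching n m
    refine ⟨m + 2 * n * N + 1, ?_⟩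
    intro V ι _ G x E s hE hd hs
    classical
    set near := fun i => G.edist x (E i).1 ≤ d ∨ G.edist x (E i).2 ≤ d
    have hcard := card_filter_add_card_filter_not (s := s) near
    by_cases hA : m ≤ #(s.filter near)
    · obtain ⟨E', hE', hd'⟩ := (hE.mono (filter_subset _ _)).exists_reorient
        (fun v => G.edist x v ≤ d) (fun i hi => (mem_filter.mp hi).2)
      exact hm G x E' _ hE' hd' hA
    have hB : 2 * n * N < #(s.filter fun i => ¬ near i) := by omega
    rcases (hE.mono (filter_subset _ _)).hasUnavoidableCopy_or_exists_isDisjointEdgeFamily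
        hB (fun i hi => by exact_mod_cast hd i (mem_filter.mp hi).1)
        (fun i hi => by simpa [near, not_or] using (mem_filter.mp hi).2)
      with h | ⟨E', J, hE', hJ, hdJ⟩
    · exact h
    rcases hN G E' J hE' hJ with h | ⟨t, htJ, ht, hEt⟩
    · exact h
    · exact hm G x E' t hEt (fun i hi => hdJ i (htJ hi)) ht

lemma SimpleGraph.Walk.not_adj_getVert_of_length_eq_dist {V : Type*} {G : SimpleGraph V}
    {u v : V} (p : G.Walk u v) (hp : p.length = G.dist u v) {i j : ℕ} (hij : i + 1 < j)
    (hj : j ≤ p.length) : ¬ G.Adj (p.getVert i) (p.getVert j) := fun h => by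
  have := dist_le ((p.take i).append (cons h (p.drop j)))
  simp only [length_append, take_length, length_cons, drop_length] at this
  omega

lemma SimpleGraph.Reachable.hasInducedCopy_pathGraph {V : Type*} {G : SimpleGraph V} {u v : V}
    (h : G.Reachable u v) {n : ℕ} (hn : n ≤ G.dist u v + 1) :
    HasInducedCopy G (SimpleGraph.pathGraph n) := by
  obtain ⟨p, hpath, hp⟩ := h.exists_path_of_dist
  refine hasInducedCopy_of_embedding ⟨⟨fun i : Fin n => p.getVert i, fun i j hij =>
    Fin.ext (hpath.getVert_injOn (by simp; omega) (by simp; omega) hij)⟩, fun {i j} => ?_⟩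
  change G.Adj (p.getVert i) (p.getVert j) ↔ _
  rw [pathGraph_adj]
  constructor
  · intro hadj
    rcases lt_trichotomy (i : ℕ) j with hlt | heq | hlt
    · by_contra hne
      exact p.not_adj_getVert_of_length_eq_dist hp (by omega) (by omega) hadj
    · exact absurd (heq ▸ hadj) G.irrefl
    · by_contra hne
      exact p.not_adj_getVert_of_length_eq_dist hp (by omega) (by omega) hadj.symm
  · rintro (h | h) <;> rw [← h]
    · exact p.adj_getVert_succ (by omega)
    · exact (p.adj_getVert_succ (by omega)).symm

lemma SimpleGraph.Connected.edist_le_of_not_hasInducedCopy_pathGraph {V : Type*}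
    {G : SimpleGraph V} (hG : G.Connected) {n : ℕ}
    (hP : ¬ HasInducedCopy G (SimpleGraph.pathGraph n)) (u v : V) : G.edist u v ≤ n := by
  have h := hG.preconnected u v
  have : G.dist u v ≤ n := by
    by_contra hlt
    exact hP (h.hasInducedCopy_pathGraph (by omega))
  rw [← h.coe_dist_eq_edist]
  exact_mod_cast this

lemma SimpleGraph.Subgraph.IsMatching.exists_isDisjointEdgeFamily {V : Type*} [Finite V]
    {G : SimpleGraph V} {M : G.Subgraph} (hM : M.IsMatching) :
    ∃ E : Fin M.edgeSet.ncard → V × V, IsDisjointEdgeFamily G E univ := by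
  set e := (Finite.equivFin M.edgeSet).symm
  have hpair : ∀ i, ∃ q : V × V, s(q.1, q.2) = (e i : Sym2 V) := fun i =>
    Sym2.ind (fun a b => ⟨(a, b), rfl⟩) (e i).1
  choose E hE using hpair
  have hadj : ∀ i, M.Adj (E i).1 (E i).2 := fun i => by
    rw [← Subgraph.mem_edgeSet, hE]
    exact (e i).2
  have hinj : ∀ {i j}, s((E i).1, (E i).2) = s((E j).1, (E j).2) → i = j := fun h =>
    e.injective (Subtype.ext (by rwa [hE, hE] at h))
  refine ⟨E, fun i _ => (hadj i).adj_sub, fun i _ j _ (h : (E i).1 = (E j).1) => hinj ?_,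
    fun i _ j _ (h : (E i).2 = (E j).2) => hinj ?_, fun i _ j _ h => ?_⟩
  · rw [h, hM.eq_of_adj_left (hadj i) (h ▸ hadj j)]
  · rw [h, hM.eq_of_adj_right (hadj i) (h ▸ hadj j)]
  · have h₂ : (E i).2 = (E j).1 := hM.eq_of_adj_left (h ▸ hadj i) (hadj j).symm
    obtain rfl : i = j := hinj (by rw [h, h₂, Sym2.eq_swap])
    exact (hadj i).ne h

theorem stmt5_general (n : ℕ) :
    ∃ N : ℕ, ∀ (V : Type) (_ : Fintype V) (G : SimpleGraph V),
      G.Connected →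
      (∃ M : G.Subgraph, M.IsMatching ∧ N ≤ M.edgeSet.ncard) →
        HasInducedCopy G (SimpleGraph.pathGraph n) ∨
        HasInducedCopy G (⊤ : SimpleGraph (Fin n)) ∨
        HasInducedCopy G (completeBipartiteGraph (Fin n) (Fin n)) ∨
        HasInducedCopy G (Sgraph2 n) ∨
        HasInducedCopy G (Fgraph n) := by
  obtain ⟨m, hm⟩ := exists_hasUnavoidableCopy_of_isInducedMatching n n
  obtain ⟨N, hN⟩ := exists_hasUnavoidableCopy_or_isInducedMatching n m
  refine ⟨N, fun V _ G hG ⟨M, hM, hMN⟩ => ?_⟩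
  by_cases hP : HasInducedCopy G (SimpleGraph.pathGraph n)
  · exact .inl hP
  obtain ⟨x⟩ := hG.nonempty
  obtain ⟨E, hE⟩ := hM.exists_isDisjointEdgeFamily
  rcases hN G E univ hE (by simpa using hMN) with h | ⟨t, -, ht, hEt⟩
  · exact h
  · exact hm G x E t hEt (fun i _ => hG.edist_le_of_not_hasInducedCopy_pathGraph hP x _) ht

theorem stmt5 (n : ℕ) (hn : 1 ≤ n) :
    ∃ N : ℕ, ∀ (V : Type) (_ : Fintype V) (G : SimpleGraph V),
      G.Connected →
      (∃ M : G.Subgraph, M.IsMatching ∧ N ≤ M.edgeSet.ncard) →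
        HasInducedCopy G (SimpleGraph.pathGraph n) ∨
        HasInducedCopy G (⊤ : SimpleGraph (Fin n)) ∨
        HasInducedCopy G (completeBipartiteGraph (Fin n) (Fin n)) ∨
        HasInducedCopy G (Sgraph2 n) ∨
        HasInducedCopy G (Fgraph n) :=
  stmt5_general n
end

section
/- Every finite simple graph G satisfies α'(G) ≤ α'_f(G) ≤ (3/2)·α'(G), where α'(G) is the matching number and α'_f(G) is the fractional matching number. -/
open SimpleGraph Finset

/-- The fractional matching number of `G`. -/
noncomputable def fracMatchNum {V : Type*} [Fintype V] [DecidableEq V]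
    (G : SimpleGraph V) [DecidableRel G.Adj] : ℝ :=
  sSup {x : ℝ | ∃ φ : Sym2 V → ℝ, (∀ e, 0 ≤ φ e ∧ φ e ≤ 1) ∧
    (∀ v : V, ∑ e ∈ G.edgeFinset.filter (fun e => v ∈ e), φ e ≤ 1) ∧
    x = ∑ e ∈ G.edgeFinset, φ e}

/-!
Let `F` be a maximum matching and `S` the set of its (at most `2|F|`) endpoints; by maximality
every edge meets `S`. For a fractional matching `φ`, summing the loads of the vertices of `S`
gives `φ(E₁) + 2 φ(E₂) ≤ 2|F|`, where `E₂` is the set of edges inside `S` and `E₁` the set of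
the others. An edge of `E₁` joins an endpoint of some `ab ∈ F` to an uncovered vertex; as there
is no augmenting path `u - a = b - w`, the `E₁`-edges at `ab` all pass through a single vertex,
so `φ(E₁) ≤ |F|`. Together, `2 φ(E) ≤ 3|F|`. The lower bound is witnessed by the indicator of `F`.
-/

theorem Finset.sum_card_filter_nsmul {ι α M : Type*} [AddCommMonoid M] (s : Finset ι)
    (t : Finset α) (r : ι → α → Prop) [∀ i a, Decidable (r i a)] (f : α → M) :
    ∑ a ∈ t, #{i ∈ s | r i a} • f a = ∑ i ∈ s, ∑ a ∈ t with r i a, f a := by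
  simp_rw [← sum_const, sum_filter]
  exact sum_comm

namespace SimpleGraph

variable {V : Type*} {G : SimpleGraph V}

section Matchings

structure IsMatchingFinset (G : SimpleGraph V) (F : Finset (Sym2 V)) : Prop where
  subset_edgeSet : (F : Set (Sym2 V)) ⊆ G.edgeSet
  eq_of_mem_of_mem : ∀ ⦃v : V⦄ ⦃e f : Sym2 V⦄, e ∈ F → f ∈ F → v ∈ e → v ∈ f → e = f

lemma IsMatchingFinset.mono {F F' : Finset (Sym2 V)} (hF : G.IsMatchingFinset F) (h : F' ⊆ F) :
    G.IsMatchingFinset F' where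
  subset_edgeSet := (coe_subset.2 h).trans hF.subset_edgeSet
  eq_of_mem_of_mem _ _ _ he hf := hF.eq_of_mem_of_mem (h he) (h hf)

def subgraphOfEdges (F : Set (Sym2 V)) (h : F ⊆ G.edgeSet) : G.Subgraph where
  verts := {v | ∃ e ∈ F, v ∈ e}
  Adj a b := s(a, b) ∈ F
  adj_sub hab := h hab
  edge_vert hab := ⟨_, hab, Sym2.mem_mk_left _ _⟩
  symm := ⟨fun a b hab => by rwa [Sym2.eq_swap]⟩

@[simp]
lemma edgeSet_subgraphOfEdges (F : Set (Sym2 V)) (h : F ⊆ G.edgeSet) :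
    (subgraphOfEdges F h).edgeSet = F := by
  ext e
  induction e with
  | _ a b => exact Subgraph.mem_edgeSet (G' := subgraphOfEdges F h)

lemma IsMatchingFinset.isMatching_subgraphOfEdges {F : Finset (Sym2 V)}
    (hF : G.IsMatchingFinset F) :
    (subgraphOfEdges (F : Set (Sym2 V)) hF.subset_edgeSet).IsMatching := by
  rintro v ⟨e, he, hve⟩
  obtain ⟨w, rfl⟩ := Sym2.mem_iff_exists.mp hve
  refine ⟨w, he, fun y hy => ?_⟩
  exact Sym2.congr_right.mp
    (hF.eq_of_mem_of_mem hy he (Sym2.mem_mk_left v y) (Sym2.mem_mk_left v w))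

lemma Subgraph.IsMatching.isMatchingFinset {M : G.Subgraph} (hM : M.IsMatching)
    (hfin : M.edgeSet.Finite) : G.IsMatchingFinset hfin.toFinset where
  subset_edgeSet := by simpa using M.edgeSet_subset
  eq_of_mem_of_mem v e f he hf hve hvf := by
    rw [Set.Finite.mem_toFinset] at he hf
    obtain ⟨a, rfl⟩ := Sym2.mem_iff_exists.mp hve
    obtain ⟨b, rfl⟩ := Sym2.mem_iff_exists.mp hvf
    rw [hM.eq_of_adj_left (Subgraph.mem_edgeSet.mp he) (Subgraph.mem_edgeSet.mp hf)]

lemma bddAbove_ncard_edgeSet_isMatching [Finite V] :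
    BddAbove {k | ∃ M : G.Subgraph, M.IsMatching ∧ M.edgeSet.ncard = k} :=
  ⟨Nat.card (Sym2 V), by rintro k ⟨M, -, rfl⟩; exact Set.ncard_le_card _⟩

lemma IsMatchingFinset.card_le_matchNum [Finite V] {F : Finset (Sym2 V)}
    (hF : G.IsMatchingFinset F) : #F ≤ matchNum G :=
  le_csSup bddAbove_ncard_edgeSet_isMatching
    ⟨_, hF.isMatching_subgraphOfEdges, by simp⟩

lemma exists_isMatchingFinset_card_eq_matchNum [Finite V] (G : SimpleGraph V) :
    ∃ F : Finset (Sym2 V), G.IsMatchingFinset F ∧ #F = matchNum G := by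
  obtain ⟨M, hM, hcard⟩ :=
    Nat.sSup_mem (s := {k | ∃ M : G.Subgraph, M.IsMatching ∧ M.edgeSet.ncard = k})
      ⟨0, ⊥, fun _ h => h.elim, by simp⟩ bddAbove_ncard_edgeSet_isMatching
  have hfin := M.edgeSet.toFinite
  refine ⟨hfin.toFinset, hM.isMatchingFinset hfin, ?_⟩
  rw [← Set.ncard_eq_toFinset_card _ hfin]
  exact hcard

end Matchings

section Cover

variable [DecidableEq V]

def coveredVerts (F : Finset (Sym2 V)) : Finset V := F.biUnion Sym2.toFinset

lemma mem_coveredVerts {F : Finset (Sym2 V)} {v : V} :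
    v ∈ coveredVerts F ↔ ∃ e ∈ F, v ∈ e := by
  simp [coveredVerts]

lemma coveredVerts_insert (e : Sym2 V) (F : Finset (Sym2 V)) :
    coveredVerts (insert e F) = e.toFinset ∪ coveredVerts F :=
  biUnion_insert

lemma coveredVerts_mono {F F' : Finset (Sym2 V)} (h : F ⊆ F') :
    coveredVerts F ⊆ coveredVerts F' :=
  biUnion_subset_biUnion_of_subset_left _ h

lemma card_coveredVerts_le (F : Finset (Sym2 V)) : #(coveredVerts F) ≤ 2 * #F := by
  rw [mul_comm]
  refine card_biUnion_le_card_mul _ _ _ fun e _ => ?_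
  rw [Sym2.card_toFinset]
  split <;> omega

lemma notMem_of_notMem_coveredVerts {F : Finset (Sym2 V)} {e : Sym2 V} {v : V} (hv : v ∈ e)
    (hvF : v ∉ coveredVerts F) : e ∉ F :=
  fun he => hvF (mem_coveredVerts.2 ⟨e, he, hv⟩)

end Cover

namespace IsMatchingFinset

variable [DecidableEq V] {F : Finset (Sym2 V)} {e : Sym2 V}

lemma insert (hF : G.IsMatchingFinset F) (he : e ∈ G.edgeSet)
    (hfree : ∀ v ∈ e, v ∉ coveredVerts F) : G.IsMatchingFinset (insert e F) where
  subset_edgeSet := by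
    rw [coe_insert]
    exact Set.insert_subset he hF.subset_edgeSet
  eq_of_mem_of_mem v e₁ e₂ h₁ h₂ hv₁ hv₂ := by
    rw [mem_insert] at h₁ h₂
    rcases h₁ with rfl | h₁ <;> rcases h₂ with rfl | h₂
    · rfl
    · exact absurd (mem_coveredVerts.2 ⟨e₂, h₂, hv₂⟩) (hfree v hv₁)
    · exact absurd (mem_coveredVerts.2 ⟨e₁, h₁, hv₁⟩) (hfree v hv₂)
    · exact hF.eq_of_mem_of_mem h₁ h₂ hv₁ hv₂

lemma notMem_coveredVerts_erase (hF : G.IsMatchingFinset F) (he : e ∈ F) {v : V} (hv : v ∈ e) :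
    v ∉ coveredVerts (F.erase e) := by
  rw [mem_coveredVerts]
  rintro ⟨f, hf, hvf⟩
  exact ne_of_mem_erase hf (hF.eq_of_mem_of_mem (mem_of_mem_erase hf) he hvf hv)

end IsMatchingFinset

structure IsMaximumMatchingFinset (G : SimpleGraph V) (F : Finset (Sym2 V)) : Prop where
  isMatchingFinset : G.IsMatchingFinset F
  card_le : ∀ F', G.IsMatchingFinset F' → #F' ≤ #F

namespace IsMaximumMatchingFinset

variable [DecidableEq V] {F : Finset (Sym2 V)}

theorem exists_mem_coveredVerts (hF : G.IsMaximumMatchingFinset F) {e : Sym2 V}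
    (he : e ∈ G.edgeSet) : ∃ v ∈ e, v ∈ coveredVerts F := by
  by_contra! hfree
  induction e with
  | _ a b =>
    have hnew : s(a, b) ∉ F :=
      notMem_of_notMem_coveredVerts (Sym2.mem_mk_left a b) (hfree a (Sym2.mem_mk_left a b))
    have := hF.card_le _ (hF.isMatchingFinset.insert he hfree)
    rw [card_insert_of_notMem hnew] at this
    omega

/-- There is no augmenting path `u - a = b - w` of length three. -/
theorem eq_of_adj_of_adj (hF : G.IsMaximumMatchingFinset F) {a b u w : V} (hab : s(a, b) ∈ F)
    (hu : u ∉ coveredVerts F) (hw : w ∉ coveredVerts F) (hau : G.Adj a u) (hbw : G.Adj b w) :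
    u = w := by
  by_contra huw
  set F₀ := F.erase s(a, b)
  have hF₀ := hF.isMatchingFinset.mono (erase_subset s(a, b) F)
  have hcov₀ : coveredVerts F₀ ⊆ coveredVerts F := coveredVerts_mono (erase_subset _ _)
  have ha : a ∈ coveredVerts F := mem_coveredVerts.2 ⟨_, hab, Sym2.mem_mk_left a b⟩
  have hb : b ∈ coveredVerts F := mem_coveredVerts.2 ⟨_, hab, Sym2.mem_mk_right a b⟩
  have ha₀ := hF.isMatchingFinset.notMem_coveredVerts_erase hab (Sym2.mem_mk_left a b)
  have hb₀ := hF.isMatchingFinset.notMem_coveredVerts_erase hab (Sym2.mem_mk_right a b)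
  have hfree₁ : ∀ v ∈ s(b, w), v ∉ coveredVerts F₀ := by
    simp only [Sym2.mem_iff]
    rintro v (rfl | rfl)
    exacts [hb₀, fun h => hw (hcov₀ h)]
  have hfree₂ : ∀ v ∈ s(a, u), v ∉ coveredVerts (insert s(b, w) F₀) := by
    simp only [Sym2.mem_iff, coveredVerts_insert, mem_union, Sym2.mem_toFinset, not_or]
    rintro v (rfl | rfl)
    · exact ⟨⟨G.ne_of_adj (hF.isMatchingFinset.subset_edgeSet hab), fun h => hw (h ▸ ha)⟩, ha₀⟩
    · exact ⟨⟨fun h => hu (h ▸ hb), huw⟩, fun h => hu (hcov₀ h)⟩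
  have hF' := (hF₀.insert hbw hfree₁).insert hau hfree₂
  have := hF.card_le _ hF'
  rw [card_insert_of_notMem (notMem_of_notMem_coveredVerts (Sym2.mem_mk_right a u)
      (hfree₂ u (Sym2.mem_mk_right a u))),
    card_insert_of_notMem (notMem_of_notMem_coveredVerts (Sym2.mem_mk_right b w)
      (fun h => hw (hcov₀ h))),
    card_erase_of_mem hab] at this
  have := card_pos.2 ⟨_, hab⟩
  omega

theorem exists_forall_mem_of_adj_uncovered (hF : G.IsMaximumMatchingFinset F) {m : Sym2 V}
    (hm : m ∈ F) : ∃ z : V, ∀ x ∈ m, ∀ y ∉ coveredVerts F, G.Adj x y → z ∈ s(x, y) := by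
  induction m with
  | _ a b =>
  by_cases hb : ∃ w ∉ coveredVerts F, G.Adj b w
  · by_cases ha : ∃ u ∉ coveredVerts F, G.Adj a u
    · obtain ⟨w, hw, hbw⟩ := hb
      obtain ⟨u, hu, hau⟩ := ha
      refine ⟨w, fun x hx y hy hxy => ?_⟩
      rcases Sym2.mem_iff.1 hx with rfl | rfl
      · rw [hF.eq_of_adj_of_adj hm hy hw hxy hbw]
        exact Sym2.mem_mk_right _ _
      · rw [← hF.eq_of_adj_of_adj hm hu hw hau hbw, hF.eq_of_adj_of_adj hm hu hy hau hxy]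
        exact Sym2.mem_mk_right _ _
    · push Not at ha
      refine ⟨b, fun x hx y hy hxy => ?_⟩
      rcases Sym2.mem_iff.1 hx with rfl | rfl
      · exact absurd hxy (ha y hy)
      · exact Sym2.mem_mk_left _ _
  · push Not at hb
    refine ⟨a, fun x hx y hy hxy => ?_⟩
    rcases Sym2.mem_iff.1 hx with rfl | rfl
    · exact Sym2.mem_mk_left _ _
    · exact absurd hxy (hb y hy)

variable [Fintype V] [DecidableRel G.Adj] {φ : Sym2 V → ℝ}

theorem sum_filter_uncovered_meets_le_one (hF : G.IsMaximumMatchingFinset F) (hφ : ∀ e, 0 ≤ φ e)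
    (hload : ∀ v, ∑ e ∈ G.edgeFinset with v ∈ e, φ e ≤ 1) {m : Sym2 V} (hm : m ∈ F) :
    ∑ e ∈ G.edgeFinset with (∃ v ∈ e, v ∉ coveredVerts F) ∧ ∃ x ∈ m, x ∈ e, φ e ≤ 1 := by
  obtain ⟨z, hz⟩ := hF.exists_forall_mem_of_adj_uncovered hm
  refine (sum_le_sum_of_subset_of_nonneg ?_ fun e _ _ => hφ e).trans (hload z)
  intro e he
  simp only [mem_filter, mem_edgeFinset] at he ⊢
  obtain ⟨he, ⟨y, hye, hy⟩, x, hxm, hxe⟩ := he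
  have hxy : x ≠ y := fun h => hy (h ▸ mem_coveredVerts.2 ⟨m, hm, hxm⟩)
  rw [(Sym2.mem_and_mem_iff hxy).1 ⟨hxe, hye⟩] at he ⊢
  exact ⟨he, hz x hxm y hy he⟩

theorem sum_filter_uncovered_le_card (hF : G.IsMaximumMatchingFinset F) (hφ : ∀ e, 0 ≤ φ e)
    (hload : ∀ v, ∑ e ∈ G.edgeFinset with v ∈ e, φ e ≤ 1) :
    ∑ e ∈ G.edgeFinset with ∃ v ∈ e, v ∉ coveredVerts F, φ e ≤ #F := by
  calc ∑ e ∈ G.edgeFinset with ∃ v ∈ e, v ∉ coveredVerts F, φ e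
      ≤ ∑ e ∈ G.edgeFinset with ∃ v ∈ e, v ∉ coveredVerts F,
          #{m ∈ F | ∃ x ∈ m, x ∈ e} • φ e := by
        refine sum_le_sum fun e he => ?_
        obtain ⟨x, hxe, hx⟩ := hF.exists_mem_coveredVerts (mem_edgeFinset.1 (mem_filter.1 he).1)
        obtain ⟨m, hm, hxm⟩ := mem_coveredVerts.1 hx
        have : 1 ≤ #{m ∈ F | ∃ x ∈ m, x ∈ e} := card_pos.2 ⟨m, mem_filter.2 ⟨hm, x, hxm, hxe⟩⟩
        rw [nsmul_eq_mul]
        exact le_mul_of_one_le_left (hφ e) (by exact_mod_cast this)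
    _ = ∑ m ∈ F,
          ∑ e ∈ G.edgeFinset with (∃ v ∈ e, v ∉ coveredVerts F) ∧ ∃ x ∈ m, x ∈ e, φ e := by
        simp only [sum_card_filter_nsmul, filter_filter]
    _ ≤ ∑ m ∈ F, 1 := sum_le_sum fun m hm => hF.sum_filter_uncovered_meets_le_one hφ hload hm
    _ = #F := by simp

theorem sum_le_three_halves_mul_card (hF : G.IsMaximumMatchingFinset F) (hφ : ∀ e, 0 ≤ φ e)
    (hload : ∀ v, ∑ e ∈ G.edgeFinset with v ∈ e, φ e ≤ 1) :
    ∑ e ∈ G.edgeFinset, φ e ≤ 3 / 2 * #F := by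
  set S := coveredVerts F
  have hS : ∑ e ∈ G.edgeFinset, (#{v ∈ S | v ∈ e} : ℝ) * φ e ≤ 2 * #F :=
    calc ∑ e ∈ G.edgeFinset, (#{v ∈ S | v ∈ e} : ℝ) * φ e
        = ∑ v ∈ S, ∑ e ∈ G.edgeFinset with v ∈ e, φ e := by
          simp only [← nsmul_eq_mul, sum_card_filter_nsmul]
      _ ≤ ∑ v ∈ S, 1 := sum_le_sum fun v _ => hload v
      _ = #S := by simp
      _ ≤ 2 * #F := by exact_mod_cast card_coveredVerts_le F
  have hedge : ∀ e ∈ G.edgeFinset,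
      2 * φ e ≤ #{v ∈ S | v ∈ e} * φ e + if ∃ v ∈ e, v ∉ S then φ e else 0 := by
    intro e he
    rw [mem_edgeFinset] at he
    split_ifs with hout
    · obtain ⟨x, hxe, hx⟩ := hF.exists_mem_coveredVerts he
      have : (1 : ℝ) ≤ #{v ∈ S | v ∈ e} := by
        exact_mod_cast card_pos.2 ⟨x, mem_filter.2 ⟨hx, hxe⟩⟩
      nlinarith [hφ e]
    · push Not at hout
      have : {v ∈ S | v ∈ e} = e.toFinset := by
        ext v
        simpa [Sym2.mem_toFinset] using hout v
      rw [this, Sym2.card_toFinset_of_not_isDiag e (G.not_isDiag_of_mem_edgeSet he)]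
      norm_num
  have hsum : 2 * ∑ e ∈ G.edgeFinset, φ e ≤
      ∑ e ∈ G.edgeFinset, (#{v ∈ S | v ∈ e} : ℝ) * φ e
        + ∑ e ∈ G.edgeFinset with ∃ v ∈ e, v ∉ S, φ e := by
    rw [mul_sum, sum_filter, ← sum_add_distrib]
    exact sum_le_sum hedge
  linarith [hF.sum_filter_uncovered_le_card hφ hload]

end IsMaximumMatchingFinset

section FractionalMatching

variable [Fintype V] [DecidableEq V] [DecidableRel G.Adj]

lemma bddAbove_fracMatchings :
    BddAbove {x : ℝ | ∃ φ : Sym2 V → ℝ, (∀ e, 0 ≤ φ e ∧ φ e ≤ 1) ∧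
      (∀ v : V, ∑ e ∈ G.edgeFinset.filter (fun e => v ∈ e), φ e ≤ 1) ∧
      x = ∑ e ∈ G.edgeFinset, φ e} := by
  refine ⟨#G.edgeFinset, ?_⟩
  rintro x ⟨φ, hφ, -, rfl⟩
  simpa using sum_le_sum fun e (_ : e ∈ G.edgeFinset) => (hφ e).2

lemma le_fracMatchNum {φ : Sym2 V → ℝ} (hφ : ∀ e, 0 ≤ φ e ∧ φ e ≤ 1)
    (hload : ∀ v, ∑ e ∈ G.edgeFinset with v ∈ e, φ e ≤ 1) :
    ∑ e ∈ G.edgeFinset, φ e ≤ fracMatchNum G :=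
  le_csSup bddAbove_fracMatchings ⟨φ, hφ, hload, rfl⟩

lemma fracMatchNum_le {c : ℝ} (h : ∀ φ : Sym2 V → ℝ, (∀ e, 0 ≤ φ e) →
      (∀ v, ∑ e ∈ G.edgeFinset with v ∈ e, φ e ≤ 1) → ∑ e ∈ G.edgeFinset, φ e ≤ c) :
    fracMatchNum G ≤ c :=
  csSup_le ⟨0, fun _ => 0, by simp, by simp, by simp⟩ fun _ ⟨φ, hφ, hload, hx⟩ =>
    hx ▸ h φ (fun e => (hφ e).1) hload

lemma IsMatchingFinset.card_le_fracMatchNum {F : Finset (Sym2 V)} (hF : G.IsMatchingFinset F) :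
    (#F : ℝ) ≤ fracMatchNum G := by
  have hFE : F ⊆ G.edgeFinset := fun e he => mem_edgeFinset.2 (hF.subset_edgeSet he)
  convert le_fracMatchNum (φ := fun e => if e ∈ F then 1 else 0)
    (fun e => by split_ifs <;> norm_num) fun v => ?_
  · rw [sum_boole, filter_mem_eq_inter, inter_eq_right.2 hFE]
  · rw [sum_boole, Nat.cast_le_one, card_le_one]
    simp only [mem_filter]
    exact fun e ⟨⟨_, hve⟩, he⟩ f ⟨⟨_, hvf⟩, hf⟩ => hF.eq_of_mem_of_mem he hf hve hvf

end FractionalMatching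

end SimpleGraph

theorem stmt8 {V : Type*} [Fintype V] [DecidableEq V]
    (G : SimpleGraph V) [DecidableRel G.Adj] :
    (matchNum G : ℝ) ≤ fracMatchNum G ∧ fracMatchNum G ≤ (3 / 2) * matchNum G := by
  obtain ⟨F, hF, hcard⟩ := exists_isMatchingFinset_card_eq_matchNum G
  have hFmax : G.IsMaximumMatchingFinset F := ⟨hF, fun F' hF' => hcard ▸ hF'.card_le_matchNum⟩
  rw [← hcard]
  exact ⟨hF.card_le_fracMatchNum,
    fracMatchNum_le fun φ hφ hload => hFmax.sum_le_three_halves_mul_card hφ hload⟩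
end

section
/- Let G be a graph with an independent set U, and let G have the property that every vertex not in U is a cut-vertex of G. If G contains an induced complete subgraph K on n vertices disjoint from U with n ≥ 2, then G contains H_n^1 as an induced subgraph. -/
open SimpleGraph Finset

/-!
For a clique vertex `v`, the rest of the clique lies in one component of `G - v`; as `v` is a
cut vertex there is another component, and since `G` is connected `v` has a neighbour `p v` in
it. Then `p v` is adjacent to no other clique vertex, and `p v`, `p w` are non-adjacent for
`v ≠ w`: an edge between them would join `p w` to `v` inside `G - w`. So the clique together with
the vertices `p v` induces `H_n^1`.
-/

namespace SimpleGraph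

variable {V : Type*} {G : SimpleGraph V}

def ReachableAvoiding (G : SimpleGraph V) (v a b : V) : Prop :=
  ∃ (ha : a ≠ v) (hb : b ≠ v), (G.induce {v}ᶜ).Reachable ⟨a, ha⟩ ⟨b, hb⟩

namespace ReachableAvoiding

variable {v a b c : V}

lemma refl (ha : a ≠ v) : G.ReachableAvoiding v a a := ⟨ha, ha, .rfl⟩

lemma ne_right : G.ReachableAvoiding v a b → b ≠ v
  | ⟨_, hb, _⟩ => hb

lemma trans :
    G.ReachableAvoiding v a b → G.ReachableAvoiding v b c → G.ReachableAvoiding v a c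
  | ⟨ha, _, r⟩, ⟨_, hc, r'⟩ => ⟨ha, hc, r.trans r'⟩

lemma of_adj (h : G.Adj a b) (ha : a ≠ v) (hb : b ≠ v) : G.ReachableAvoiding v a b :=
  ⟨ha, hb, Adj.reachable (by simpa using h)⟩

end ReachableAvoiding

lemma Preconnected.nontrivial_connectedComponent_induce_compl {v : V} (hG : G.Preconnected)
    (hv : IsCutVertex G v) : Nontrivial (G.induce {v}ᶜ).ConnectedComponent := by
  have hone : Nat.card G.ConnectedComponent = 1 := Nat.card_eq_one_iff_unique.mpr
    ⟨hG.subsingleton_connectedComponent, ⟨G.connectedComponentMk v⟩⟩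
  have hlt : 1 < Nat.card (G.induce {v}ᶜ).ConnectedComponent := hone ▸ hv
  have := Nat.finite_of_card_ne_zero (Nat.ne_zero_of_lt hlt)
  exact Finite.one_lt_card_iff_nontrivial.mp hlt

lemma Preconnected.exists_not_reachableAvoiding_of_isCutVertex {v w : V} (hG : G.Preconnected)
    (hv : IsCutVertex G v) (hw : w ≠ v) : ∃ x ≠ v, ¬ G.ReachableAvoiding v w x := by
  have := hG.nontrivial_connectedComponent_induce_compl hv
  obtain ⟨c, hc⟩ := exists_ne ((G.induce {v}ᶜ).connectedComponentMk ⟨w, hw⟩)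
  obtain ⟨⟨x, hx⟩, rfl⟩ := c.exists_rep
  exact ⟨x, hx, fun ⟨_, _, r⟩ => hc (ConnectedComponent.sound r).symm⟩

/-- A walk from `v` to `x` must leave the set `{v} ∪ {y | y reachable from w in G - v}`, and an
edge leaving it can only start at `v`. -/
lemma Preconnected.exists_adj_not_reachableAvoiding {v w x : V} (hG : G.Preconnected)
    (hx : x ≠ v) (hwx : ¬ G.ReachableAvoiding v w x) :
    ∃ u, G.Adj v u ∧ ¬ G.ReachableAvoiding v w u := by
  obtain ⟨p⟩ := hG v x
  obtain ⟨d, -, hd, hd'⟩ := p.exists_boundary_dart {y | y = v ∨ G.ReachableAvoiding v w y}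
    (Or.inl rfl) (by simp [hx, hwx])
  simp only [Set.mem_ofPred_eq, not_or] at hd hd'
  rcases hd with hd | hd
  · exact ⟨d.snd, hd ▸ d.adj, hd'.2⟩
  · exact absurd (hd.trans (.of_adj d.adj hd.ne_right hd'.1)) hd'.2

lemma Preconnected.exists_adj_not_reachableAvoiding_of_isCutVertex {v w : V}
    (hG : G.Preconnected) (hv : IsCutVertex G v) (hw : w ≠ v) :
    ∃ u, G.Adj v u ∧ ¬ G.ReachableAvoiding v w u :=
  have ⟨_, hx, hwx⟩ := hG.exists_not_reachableAvoiding_of_isCutVertex hv hw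
  hG.exists_adj_not_reachableAvoiding hx hwx

lemma IsClique.exists_adj_not_reachableAvoiding {s : Set V} {v w₀ : V} (hG : G.Preconnected)
    (hs : G.IsClique s) (hv : IsCutVertex G v) (hw₀ : w₀ ∈ s) (hw₀v : w₀ ≠ v) :
    ∃ u, G.Adj v u ∧ ∀ w ∈ s, w ≠ v → ¬ G.ReachableAvoiding v w u := by
  obtain ⟨u, hvu, hu⟩ := hG.exists_adj_not_reachableAvoiding_of_isCutVertex hv hw₀v
  refine ⟨u, hvu, fun w hw hwv hwu => hu ?_⟩
  rcases eq_or_ne w₀ w with rfl | hne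
  · exact hwu
  · exact (ReachableAvoiding.of_adj (hs hw₀ hw hne) hw₀v hwv).trans hwu

end SimpleGraph

section Hgraph1

variable {V : Type*} {G : SimpleGraph V}

lemma hgraph1_adj_inl_inl {n : ℕ} {i j : Fin n} :
    (Hgraph1 n).Adj (.inl i) (.inl j) ↔ i ≠ j := by
  simp [Hgraph1]

lemma hgraph1_adj_inl_inr {n : ℕ} {i j : Fin n} :
    (Hgraph1 n).Adj (.inl i) (.inr j) ↔ i = j := by
  simp [Hgraph1]

lemma hgraph1_adj_inr_inl {n : ℕ} {i j : Fin n} :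
    (Hgraph1 n).Adj (.inr i) (.inl j) ↔ j = i := by
  simp [Hgraph1]

lemma hgraph1_not_adj_inr_inr {n : ℕ} {i j : Fin n} : ¬ (Hgraph1 n).Adj (.inr i) (.inr j) := by
  simp [Hgraph1]

lemma hgraph1_isIndContained {n : ℕ} (e p : Fin n → V)
    (hee : ∀ i j, i ≠ j → G.Adj (e i) (e j)) (hep : ∀ i j, G.Adj (e i) (p j) ↔ i = j)
    (hpp : ∀ i j, ¬ G.Adj (p i) (p j)) : Hgraph1 n ⊴ G := by
  have hadj : ∀ a b, G.Adj (Sum.elim e p a) (Sum.elim e p b) ↔ (Hgraph1 n).Adj a b := by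
    rintro (i | i) (j | j) <;> simp only [Sum.elim_inl, Sum.elim_inr]
    · rw [hgraph1_adj_inl_inl]
      exact ⟨fun h hij => h.ne (congrArg e hij), hee i j⟩
    · rw [hgraph1_adj_inl_inr]
      exact hep i j
    · rw [G.adj_comm, hgraph1_adj_inr_inl]
      exact hep j i
    · exact iff_of_false (hpp i j) hgraph1_not_adj_inr_inr
  have hinj : Function.Injective (Sum.elim e p) := by
    rintro (i | i) (j | j) h <;> simp only [Sum.elim_inl, Sum.elim_inr] at h
    · by_contra hij
      exact (hee i j fun h' => hij (congrArg _ h')).ne h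
    · exact absurd ((hep i i).mpr rfl).symm (h ▸ hpp i j)
    · exact absurd ((hep j j).mpr rfl).symm (h ▸ hpp j i)
    · exact congrArg _ ((hep i j).mp (h ▸ (hep i i).mpr rfl))
  exact ⟨{ toFun := Sum.elim e p, inj' := hinj, map_rel_iff' := hadj _ _ }⟩

lemma hgraph1_isIndContained_of_not_reachableAvoiding {n : ℕ} (e p : Fin n → V)
    (hee : ∀ i j, i ≠ j → G.Adj (e i) (e j)) (hp : ∀ i, G.Adj (e i) (p i))
    (hsep : ∀ i j, i ≠ j → ¬ G.ReachableAvoiding (e i) (e j) (p i)) : Hgraph1 n ⊴ G := by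
  have hne : ∀ i j, i ≠ j → e i ≠ e j := fun i j hij => (hee i j hij).ne
  refine hgraph1_isIndContained e p hee (fun i j => ⟨fun h => ?_, fun h => h ▸ hp i⟩) ?_
  · by_contra hij
    exact hsep j i (Ne.symm hij) (.of_adj h (hne i j hij) (hp j).ne')
  · intro i j h
    rcases eq_or_ne i j with rfl | hij
    · exact h.ne rfl
    have hpe : p i ≠ e j := fun hpe => hsep i j hij (by rw [hpe]; exact .refl (hne j i hij.symm))
    exact hsep j i hij.symm
      ((ReachableAvoiding.of_adj (hp i) (hne i j hij) hpe).trans (.of_adj h hpe (hp j).ne'))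

end Hgraph1

theorem stmt14_general {V : Type*} (G : SimpleGraph V) (hG : G.Connected)
    (U : Set V)
    (hcut : ∀ v, v ∉ U → IsCutVertex G v)
    (n : ℕ) (hn : 2 ≤ n) (s : Finset V) (hclique : G.IsNClique n s)
    (hdisj : ∀ v ∈ s, v ∉ U) :
    HasInducedCopy G (Hgraph1 n) := by
  let e : Fin n → V := fun i => (s.equivFinOfCardEq hclique.card_eq).symm i
  have hes : ∀ i, e i ∈ s := fun i => Subtype.prop _
  have hee : ∀ i j, i ≠ j → G.Adj (e i) (e j) := fun i j hij =>
    hclique.isClique (hes i) (hes j) (by simpa [e, Subtype.val_inj] using hij)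
  have hpendant : ∀ i, ∃ u, G.Adj (e i) u ∧
      ∀ w ∈ (s : Set V), w ≠ e i → ¬ G.ReachableAvoiding (e i) w u := by
    intro i
    obtain ⟨w₀, hw₀, hw₀v⟩ := s.exists_mem_ne (by rw [hclique.card_eq]; omega) (e i)
    exact hclique.isClique.exists_adj_not_reachableAvoiding hG.preconnected
      (hcut _ (hdisj _ (hes i))) hw₀ hw₀v
  choose p hp hsep using hpendant
  exact isIndContained_iff_exists_iso_induce.mp <|
    hgraph1_isIndContained_of_not_reachableAvoiding e p hee hp fun i j hij =>
      hsep i (e j) (hes j) (hee j i hij.symm).ne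

theorem stmt14 {V : Type*} [Fintype V] (G : SimpleGraph V) (hG : G.Connected)
    (U : Set V) (hU : _root_.IsIndepSet G U)
    (hcut : ∀ v, v ∉ U → IsCutVertex G v)
    (n : ℕ) (hn : 2 ≤ n) (s : Finset V) (hclique : G.IsNClique n s)
    (hdisj : ∀ v ∈ s, v ∉ U) :
    HasInducedCopy G (Hgraph1 n) :=
  stmt14_general G hG U hcut n hn s hclique hdisj
end

section
/- Let G be a graph with an induced matching M whose edges are contracted to form G'. If G' contains an induced path on 3n+1 vertices, then G contains an induced path on at least 3n+1 vertices, and in particular contains P_n as an induced subgraph. -/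
open SimpleGraph Finset

/-!
Pull the induced path `e` of `G'` back to the subgraph of `G` induced by `p ⁻¹' range e`. Each
fibre of `p` is a vertex or a matching edge, hence a clique, so this subgraph joins the fibre of
the first vertex of `e` to the fibre of the last one, and along each of its edges the position on
`e` grows by at most one. A shortest walk between these two fibres has no chords, so it is an
induced path of `G`, and it passes through at least `3n + 1` positions.
-/

namespace SimpleGraph

variable {V W : Type*} {G : SimpleGraph V} {H : SimpleGraph W}

lemma pathGraph_isIndContained_pathGraph {n m : ℕ} (h : n ≤ m) : pathGraph n ⊴ pathGraph m :=
  ⟨⟨Fin.castLEEmb h, by simp [pathGraph_adj]⟩⟩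

namespace Walk

lemma not_adj_getVert_of_length_eq_dist_s16 {u v : W} (p : H.Walk u v)
    (hp : p.length = H.dist u v) {i j : ℕ} (hij : i + 1 < j) (hj : j ≤ p.length) :
    ¬ H.Adj (p.getVert i) (p.getVert j) := fun h => by
  have := dist_le ((p.take i).append (cons h (p.drop j)))
  simp only [length_append, take_length, length_cons, drop_length] at this
  omega

lemma pathGraph_isIndContained_of_length_eq_dist_s16 {u v : W} (p : H.Walk u v)
    (hp : p.length = H.dist u v) : pathGraph (p.length + 1) ⊴ H := by
  refine ⟨⟨⟨fun i => p.getVert i, fun i j hij => Fin.ext ?_⟩, fun {i j} => ?_⟩⟩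
  · exact (p.isPath_of_length_eq_dist hp).getVert_injOn
      (Set.mem_ofPred_eq ▸ Nat.lt_succ_iff.mp i.2)
      (Set.mem_ofPred_eq ▸ Nat.lt_succ_iff.mp j.2) hij
  · change H.Adj (p.getVert i) (p.getVert j) ↔ _
    rw [pathGraph_adj]
    refine ⟨fun h => ?_, ?_⟩
    · by_contra hne
      rcases Nat.lt_or_gt_of_ne (fun hij => h.ne (congrArg p.getVert hij)) with hlt | hlt
      · exact p.not_adj_getVert_of_length_eq_dist_s16 hp (by omega) (by omega) h
      · exact p.not_adj_getVert_of_length_eq_dist_s16 hp (by omega) (by omega) h.symm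
    · rintro (h | h)
      · simpa [h] using p.adj_getVert_succ (i := i) (by omega)
      · simpa [h] using (p.adj_getVert_succ (i := j) (by omega)).symm

lemma le_add_length {φ : W → ℕ} (hφ : ∀ a b, H.Adj a b → φ b ≤ φ a + 1) {u v : W}
    (p : H.Walk u v) : φ v ≤ φ u + p.length := by
  induction p with
  | nil => simp
  | cons h _ ih => have := hφ _ _ h; simp only [length_cons]; omega

end Walk

lemma exists_pathGraph_isIndContained_of_reachable {φ : W → ℕ}
    (hφ : ∀ a b, H.Adj a b → φ b ≤ φ a + 1) {u v : W} (huv : H.Reachable u v) :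
    ∃ m, φ v ≤ φ u + m ∧ pathGraph (m + 1) ⊴ H := by
  obtain ⟨p, hp⟩ := huv.exists_walk_length_eq_dist
  exact ⟨p.length, p.le_add_length hφ, p.pathGraph_isIndContained_of_length_eq_dist_s16 hp⟩

variable {V' : Type*} {G' : SimpleGraph V'} {p : V → V'}

lemma Reachable.induce_preimage (hfibre : ∀ a b, p a = p b → a = b ∨ G.Adj a b)
    (hlift : ∀ a b, G'.Adj a b → ∃ u w, p u = a ∧ p w = b ∧ G.Adj u w)
    {T : Set V'} {a b : T} (hab : (G'.induce T).Reachable a b) {s t : p ⁻¹' T}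
    (hs : p s = a) (ht : p t = b) : (G.induce (p ⁻¹' T)).Reachable s t := by
  have hsame : ∀ s t : p ⁻¹' T, p s = p t → (G.induce (p ⁻¹' T)).Reachable s t := by
    intro s t hst
    rcases hfibre s t hst with h | h
    · exact Subtype.ext h ▸ .rfl
    · exact Adj.reachable (G := G.induce _) h
  obtain ⟨q⟩ := hab
  induction q generalizing s with
  | nil => exact hsame s t (hs.trans ht.symm)
  | @cons a c _ hac _ ih =>
    obtain ⟨u, w, hu, hw, huw⟩ := hlift _ _ hac
    let u' : p ⁻¹' T := ⟨u, show p u ∈ T from hu ▸ a.2⟩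
    let w' : p ⁻¹' T := ⟨w, show p w ∈ T from hw ▸ c.2⟩
    have huw' : (G.induce (p ⁻¹' T)).Adj u' w' := huw
    exact (hsame s u' (hs.trans hu.symm)).trans (huw'.reachable.trans (ih hw ht))

theorem exists_pathGraph_isIndContained_of_contraction (hsurj : Function.Surjective p)
    (hfibre : ∀ a b, p a = p b → a = b ∨ G.Adj a b)
    (hlift : ∀ a b, G'.Adj a b → ∃ u w, p u = a ∧ p w = b ∧ G.Adj u w)
    (hproj : ∀ u w, G.Adj u w → p u ≠ p w → G'.Adj (p u) (p w))
    {k : ℕ} (hpath : pathGraph (k + 1) ⊴ G') :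
    ∃ m, k + 1 ≤ m ∧ pathGraph m ⊴ G := by
  obtain ⟨e⟩ := hpath
  set S : Set V := p ⁻¹' Set.range e
  let φ : S → ℕ := fun s => ((Function.invFun e (p s) : Fin (k + 1)) : ℕ)
  have hφ_eq : ∀ (s : S) (j : Fin (k + 1)), p s = e j → φ s = j := fun s j h => by
    simp only [φ, h, Function.leftInverse_invFun e.injective j]
  have hφ : ∀ s t : S, (G.induce S).Adj s t → φ t ≤ φ s + 1 := by
    rintro ⟨s, i, hi⟩ ⟨t, j, hj⟩ hst
    rw [hφ_eq ⟨s, i, hi⟩ i hi.symm, hφ_eq ⟨t, j, hj⟩ j hj.symm]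
    by_cases hij : i = j
    · simp [hij]
    · have := hproj s t hst (by rw [← hi, ← hj]; exact e.injective.ne hij)
      rw [← hi, ← hj, e.map_adj_iff, pathGraph_adj] at this
      omega
  obtain ⟨s, hs⟩ := hsurj (e 0)
  obtain ⟨t, ht⟩ := hsurj (e (Fin.last k))
  have hst : (G.induce S).Reachable ⟨s, 0, hs.symm⟩ ⟨t, _, ht.symm⟩ :=
    ((pathGraph_connected k 0 (Fin.last k)).map e.isoInduceRange.toHom).induce_preimage
      hfibre hlift hs ht
  obtain ⟨m, hm, hpathm⟩ := exists_pathGraph_isIndContained_of_reachable hφ hst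
  rw [hφ_eq ⟨s, 0, hs.symm⟩ 0 hs, hφ_eq ⟨t, _, ht.symm⟩ _ ht] at hm
  rw [Fin.val_last, Fin.val_zero, zero_add] at hm
  exact ⟨m + 1, by omega, hpathm.trans ⟨Embedding.induce S⟩⟩

end SimpleGraph

theorem stmt16_general {V V' : Type*} (G : SimpleGraph V) (G' : SimpleGraph V')
    (N n : ℕ) (x y : Fin N → V)
    (hM : ∀ i, G.Adj (x i) (y i))
    (p : V → V') (hsurj : Function.Surjective p)
    (hp : ∀ a b : V, p a = p b ↔ a = b ∨ ∃ i, ({a, b} : Set V) = {x i, y i})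
    (hadj : ∀ a b : V', G'.Adj a b ↔
      a ≠ b ∧ ∃ u w : V, p u = a ∧ p w = b ∧ G.Adj u w)
    (hpath : HasInducedCopy G' (SimpleGraph.pathGraph (3 * n + 1))) :
    (∃ m : ℕ, 3 * n + 1 ≤ m ∧ HasInducedCopy G (SimpleGraph.pathGraph m)) ∧
    HasInducedCopy G (SimpleGraph.pathGraph n) := by
  simp only [HasInducedCopy, ← isIndContained_iff_exists_iso_induce] at hpath ⊢
  have hfibre : ∀ a b, p a = p b → a = b ∨ G.Adj a b := fun a b hab => by
    obtain h | ⟨i, hi⟩ := (hp a b).mp hab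
    · exact .inl h
    · obtain ⟨rfl, rfl⟩ | ⟨rfl, rfl⟩ := Set.pair_eq_pair_iff.mp hi
      exacts [.inr (hM i), .inr (hM i).symm]
  obtain ⟨m, hm, hcopy⟩ := exists_pathGraph_isIndContained_of_contraction hsurj hfibre
    (fun a b h => ((hadj a b).mp h).2)
    (fun u w h hne => (hadj _ _).mpr ⟨hne, u, w, rfl, rfl, h⟩) hpath
  exact ⟨⟨m, hm, hcopy⟩, (pathGraph_isIndContained_pathGraph (by omega)).trans hcopy⟩

theorem stmt16 {V V' : Type*} [Fintype V] (G : SimpleGraph V) (G' : SimpleGraph V')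
    (N n : ℕ) (x y : Fin N → V)
    (hM : ∀ i, G.Adj (x i) (y i))
    (hdisj : ∀ i j, i ≠ j → ({x i, y i} : Set V) ∩ {x j, y j} = ∅)
    (hindM : ∀ i j, i ≠ j → ¬ G.Adj (x i) (x j) ∧ ¬ G.Adj (y i) (y j) ∧
      ¬ G.Adj (x i) (y j) ∧ ¬ G.Adj (y i) (x j))
    (p : V → V') (hsurj : Function.Surjective p)
    (hp : ∀ a b : V, p a = p b ↔ a = b ∨ ∃ i, ({a, b} : Set V) = {x i, y i})
    (hadj : ∀ a b : V', G'.Adj a b ↔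
      a ≠ b ∧ ∃ u w : V, p u = a ∧ p w = b ∧ G.Adj u w)
    (hpath : HasInducedCopy G' (SimpleGraph.pathGraph (3 * n + 1))) :
    (∃ m : ℕ, 3 * n + 1 ≤ m ∧ HasInducedCopy G (SimpleGraph.pathGraph m)) ∧
    HasInducedCopy G (SimpleGraph.pathGraph n) :=
  stmt16_general G G' N n x y hM p hsurj hp hadj hpath
end
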